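/- arXiv:2006.03989 — 12 statements merged into one kernel-verified Lean document; each statement's English description precedes it below -/
import Mathlib

section
/- Let s ∈ (−1, 0) and let f be a probability density on ℝ that is s-concave, with distribution function F(x) = ∫_{−∞}^x f(t) dt. Then for every s* ≤ s/(1+s) (note s/(1+s) < 0), F is a bi-s*-concave distribution function. -/
open Set MeasureTheory Filter
open scoped NNReal ENNReal

/-- A (cumulative) distribution function on `ℝ`: nondecreasing, `[0,1]`-valued,
right-continuous, with limit `0` at `-∞` and `1` at `+∞`. -/
def IsDistFun (F : ℝ → ℝ) : Prop :=
  Monotone F ∧ (∀ x, 0 ≤ F x ∧ F x ≤ 1) ∧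
  (∀ x, ContinuousWithinAt F (Ici x) x) ∧
  Tendsto F atBot (nhds 0) ∧ Tendsto F atTop (nhds 1)

/-- `F` is non-degenerate: it takes a value strictly between 0 and 1. -/
def NonDeg (F : ℝ → ℝ) : Prop := ∃ x, 0 < F x ∧ F x < 1

/-- `J(F) = {x : 0 < F x < 1}`. -/
def JSet (F : ℝ → ℝ) : Set ℝ := {x | 0 < F x ∧ F x < 1}

/-- `F` is bi-`s*`-concave: `F` is continuous on `ℝ` and, on `J(F)`,
for `s* < 0` both `F ^ s*` and `(1 - F) ^ s*` are convex; for `s* = 0` both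
`log F` and `log (1 - F)` are concave; for `s* > 0` both `F ^ s*` and
`(1 - F) ^ s*` are concave. -/
def IsBiSStarConcave (s : ℝ) (F : ℝ → ℝ) : Prop :=
  Continuous F ∧
  (s < 0 → ConvexOn ℝ (JSet F) (fun x => F x ^ s) ∧
    ConvexOn ℝ (JSet F) (fun x => (1 - F x) ^ s)) ∧
  (s = 0 → ConcaveOn ℝ (JSet F) (fun x => Real.log (F x)) ∧
    ConcaveOn ℝ (JSet F) (fun x => Real.log (1 - F x))) ∧
  (0 < s → ConcaveOn ℝ (JSet F) (fun x => F x ^ s) ∧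
    ConcaveOn ℝ (JSet F) (fun x => (1 - F x) ^ s))

/-!
On the support of `f` the function `g = f ^ s` is convex. Take `x < y` in `J(F)` with
`f x < f y` and let `L` be the secant line of `g` through `x` and `y`, of slope `m < 0`:
convexity puts `f` below `L ^ (1 / s)` left of `x` and above it on `[x, y]`. As `L ^ (1 / s)`
has the positive primitive `L ^ (1 / s + 1) / (m (1 / s + 1))`, integrating these bounds shows
that `f ^ (1 + s) / F` is nonincreasing on `J(F)`, i.e. that the derivative
`(s / (1 + s)) (f ^ (1 + s) / F) ^ (1 / (1 + s))` of `F ^ (s / (1 + s))` is nondecreasing.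
Smaller exponents `t` follow by composing with the convex increasing map
`u ↦ u ^ (t (1 + s) / s)`, and `1 - F` is treated by applying all this to the reflected
density `x ↦ f (-x)`.
-/

open ProbabilityTheory

theorem convexOn_rpow_of_sConcave {s : ℝ} {f : ℝ → ℝ} (hs : s < 0)
    (hf : ∀ x y θ : ℝ, 0 < f x → 0 < f y → 0 < θ → θ < 1 →
      ((1 - θ) * f x ^ s + θ * f y ^ s) ^ (1 / s) ≤ f ((1 - θ) * x + θ * y)) :
    ConvexOn ℝ {x | 0 < f x} fun x => f x ^ s := by
  have key : ∀ x y a b : ℝ, 0 < f x → 0 < f y → 0 < a → 0 < b → a + b = 1 →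
      0 < f (a • x + b • y) ∧ f (a • x + b • y) ^ s ≤ a • f x ^ s + b • f y ^ s := by
    intro x y a b hx hy ha hb hab
    obtain rfl : a = 1 - b := by linarith
    have hmean : 0 < (1 - b) * f x ^ s + b * f y ^ s := by
      have := Real.rpow_pos_of_pos hx s
      have := Real.rpow_pos_of_pos hy s
      positivity
    have h := hf x y b hx hy hb (by linarith)
    rw [one_div] at h
    have hpos := (Real.rpow_pos_of_pos hmean _).trans_le h
    exact ⟨hpos, (Real.rpow_inv_le_iff_of_neg hmean hpos hs).1 h⟩
  exact convexOn_iff_forall_pos.2 ⟨convex_iff_forall_pos.2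
    fun x hx y hy a b ha hb hab => (key x y a b hx hy ha hb hab).1,
    fun x hx y hy a b ha hb hab => (key x y a b hx hy ha hb hab).2⟩

theorem ConvexOn.rpow_of_le_of_neg {E : Type*} [AddCommGroup E] [Module ℝ E] {S : Set E}
    {h : E → ℝ} {a b : ℝ} (hconv : ConvexOn ℝ S fun x => h x ^ a) (hpos : ∀ x ∈ S, 0 < h x)
    (ha : a < 0) (hba : b ≤ a) : ConvexOn ℝ S fun x => h x ^ b := by
  have hpow : ∀ x ∈ S, h x ^ b = (h x ^ a) ^ (b / a) := fun x hx => by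
    rw [← Real.rpow_mul (hpos x hx).le, mul_div_cancel₀ _ ha.ne]
  refine ⟨hconv.1, fun x hx y hy c d hc hd hcd => ?_⟩
  dsimp only
  rw [hpow _ (hconv.1 hx hy hc hd hcd), hpow x hx, hpow y hy]
  have hx' := Real.rpow_pos_of_pos (hpos x hx) a
  have hy' := Real.rpow_pos_of_pos (hpos y hy) a
  calc (h (c • x + d • y) ^ a) ^ (b / a) ≤ (c • h x ^ a + d • h y ^ a) ^ (b / a) :=
        Real.rpow_le_rpow (Real.rpow_nonneg (hpos _ (hconv.1 hx hy hc hd hcd)).le _)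
          (hconv.2 hx hy hc hd hcd) (div_nonneg_of_nonpos (by linarith) ha.le)
    _ ≤ c • (h x ^ a) ^ (b / a) + d • (h y ^ a) ^ (b / a) :=
        (convexOn_rpow ((one_le_div_of_neg ha).2 hba)).2 hx'.le hy'.le hc hd hcd

lemma continuousOn_of_convexOn_rpow {E : Type*} [NormedAddCommGroup E] [NormedSpace ℝ E]
    [FiniteDimensional ℝ E] {S : Set E} {f : E → ℝ} {s : ℝ} (hs : s ≠ 0) (hS : IsOpen S)
    (hg : ConvexOn ℝ S fun x => f x ^ s) (hpos : ∀ x ∈ S, 0 < f x) : ContinuousOn f S := by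
  refine ((hg.continuousOn hS).rpow_const (p := s⁻¹)
    fun x hx => Or.inl (Real.rpow_pos_of_pos (hpos x hx) s).ne').congr fun x hx => ?_
  show f x = (f x ^ s) ^ s⁻¹
  rw [← Real.rpow_mul (hpos x hx).le, mul_inv_cancel₀ hs, Real.rpow_one]

section Secant

variable {S : Set ℝ} {g : ℝ → ℝ} {x y u : ℝ}

noncomputable def secant (g : ℝ → ℝ) (x y u : ℝ) : ℝ := g x + slope g x y * (u - x)

@[simp] lemma secant_left : secant g x y x = g x := by simp [secant]

lemma secant_right (hxy : x ≠ y) : secant g x y y = g y := by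
  rw [secant, slope_def_field]
  field_simp [sub_ne_zero.2 hxy.symm]
  ring

lemma hasDerivAt_secant : HasDerivAt (secant g x y) (slope g x y) u := by
  show HasDerivAt (fun v => g x + slope g x y * (v - x)) _ u
  simpa using (((hasDerivAt_id u).sub_const x).const_mul (slope g x y)).const_add (g x)

lemma ConvexOn.secant_le_of_le (hg : ConvexOn ℝ S g) (hx : x ∈ S) (hy : y ∈ S) (hu : u ∈ S)
    (hxy : x < y) (hux : u ≤ x) : secant g x y u ≤ g u := by
  rcases eq_or_lt_of_le hux with rfl | hux
  · simp
  have h := hg.secant_mono hx hu hy hux.ne hxy.ne' (hux.trans hxy).le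
  rw [div_le_iff_of_neg (sub_neg.2 hux), ← slope_def_field] at h
  rw [secant]
  linarith

lemma ConvexOn.le_secant_of_mem_Icc (hg : ConvexOn ℝ S g) (hx : x ∈ S) (hy : y ∈ S)
    (hu : u ∈ Icc x y) : g u ≤ secant g x y u := by
  rcases eq_or_lt_of_le hu.1 with rfl | hxu
  · simp
  have h := hg.secant_mono hx (hg.1.ordConnected.out hx hy hu) hy hxu.ne' (hxu.trans_le hu.2).ne'
    hu.2
  rw [div_le_iff₀ (sub_pos.2 hxu), ← slope_def_field] at h
  rw [secant]
  linarith

end Secant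

lemma HasDerivAt.rpow_add_one_div {L : ℝ → ℝ} {m p u : ℝ} (hL : HasDerivAt L m u)
    (hu : 0 < L u) (hmp : m * (p + 1) ≠ 0) :
    HasDerivAt (fun v => L v ^ (p + 1) / (m * (p + 1))) (L u ^ p) u := by
  have h := (hL.rpow_const (p := p + 1) (Or.inl hu.ne')).div_const (m * (p + 1))
  rwa [add_sub_cancel_right, mul_div_cancel_left₀ _ hmp] at h

section Density

variable {f F : ℝ → ℝ}

lemma isProbabilityMeasure_withDensity_ofReal (hf_nonneg : ∀ x, 0 ≤ f x)
    (hf_int : ∫ x, f x = 1) :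
    IsProbabilityMeasure (volume.withDensity fun x => ENNReal.ofReal (f x)) := by
  constructor
  rw [withDensity_apply _ MeasurableSet.univ, Measure.restrict_univ,
    ← ofReal_integral_eq_lintegral_ofReal (Integrable.of_integral_ne_zero (by simp [hf_int]))
      (ae_of_all _ hf_nonneg), hf_int, ENNReal.ofReal_one]

lemma cdf_withDensity_ofReal (hf_nonneg : ∀ x, 0 ≤ f x) (hf_int : ∫ x, f x = 1) (x : ℝ) :
    cdf (volume.withDensity fun x => ENNReal.ofReal (f x)) x = ∫ t in Iic x, f t := by
  have := isProbabilityMeasure_withDensity_ofReal hf_nonneg hf_int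
  have hfi : Integrable f := Integrable.of_integral_ne_zero (by simp [hf_int])
  rw [cdf_eq_real, measureReal_def, withDensity_apply _ measurableSet_Iic,
    ← ofReal_integral_eq_lintegral_ofReal hfi.integrableOn (ae_of_all _ hf_nonneg),
    ENNReal.toReal_ofReal (setIntegral_nonneg measurableSet_Iic fun t _ => hf_nonneg t)]

theorem isDistFun_of_density (hf_nonneg : ∀ x, 0 ≤ f x) (hf_int : ∫ x, f x = 1)
    (hF : ∀ x, F x = ∫ t in Iic x, f t) : IsDistFun F := by
  obtain rfl : F = cdf (volume.withDensity fun x => ENNReal.ofReal (f x)) :=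
    funext fun x => (hF x).trans (cdf_withDensity_ofReal hf_nonneg hf_int x).symm
  exact ⟨(cdf _).mono, fun x => ⟨cdf_nonneg _ x, cdf_le_one _ x⟩,
    (cdf _).right_continuous, tendsto_cdf_atBot _, tendsto_cdf_atTop _⟩

lemma eq_add_intervalIntegral_of_density (hfi : Integrable f)
    (hF : ∀ x, F x = ∫ t in Iic x, f t) (a : ℝ) : F = fun x => F a + ∫ t in a..x, f t := by
  funext x
  rw [← intervalIntegral.integral_Iic_sub_Iic hfi.integrableOn hfi.integrableOn, hF, hF]
  ring

theorem continuous_of_density (hfi : Integrable f) (hF : ∀ x, F x = ∫ t in Iic x, f t) :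
    Continuous F := by
  rw [eq_add_intervalIntegral_of_density hfi hF 0]
  exact continuous_const.add (hfi.continuous_primitive 0)

theorem hasDerivAt_of_density {x : ℝ} (hfi : Integrable f)
    (hF : ∀ x, F x = ∫ t in Iic x, f t) (hx : ContinuousAt f x) : HasDerivAt F (f x) x := by
  rw [eq_add_intervalIntegral_of_density hfi hF x]
  exact (intervalIntegral.integral_hasDerivAt_right hfi.intervalIntegrable
    hfi.aestronglyMeasurable.stronglyMeasurableAtFilter hx).const_add _

lemma add_integral_Ioi_of_density (hf_int : ∫ x, f x = 1)
    (hF : ∀ x, F x = ∫ t in Iic x, f t) (x : ℝ) : F x + ∫ t in Ioi x, f t = 1 := by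
  rw [hF, ← compl_Iic, integral_add_compl measurableSet_Iic
    (Integrable.of_integral_ne_zero (by simp [hf_int])), hf_int]

lemma one_sub_comp_neg_of_density (hf_int : ∫ x, f x = 1)
    (hF : ∀ x, F x = ∫ t in Iic x, f t) (x : ℝ) : 1 - F (-x) = ∫ t in Iic x, f (-t) := by
  rw [integral_comp_neg_Iic, ← add_integral_Ioi_of_density hf_int hF (-x)]
  ring

lemma pos_of_mem_JSet (hf_supp : Convex ℝ {x | 0 < f x}) (hf_nonneg : ∀ x, 0 ≤ f x)
    (hf_int : ∫ x, f x = 1) (hF : ∀ x, F x = ∫ t in Iic x, f t) {x : ℝ} (hx : x ∈ JSet F) :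
    0 < f x := by
  obtain ⟨u, hux, hu⟩ : ∃ u ≤ x, 0 < f u := by
    by_contra! h
    have : F x = 0 := by
      rw [hF]
      exact setIntegral_eq_zero_of_forall_eq_zero fun u hu => le_antisymm (h u hu) (hf_nonneg u)
    exact hx.1.ne' this
  obtain ⟨v, hxv, hv⟩ : ∃ v ≥ x, 0 < f v := by
    by_contra! h
    have : ∫ t in Ioi x, f t = 0 := setIntegral_eq_zero_of_forall_eq_zero
      fun v hv => le_antisymm (h v (le_of_lt hv)) (hf_nonneg v)
    have := add_integral_Ioi_of_density hf_int hF x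
    linarith [hx.2]
  exact hf_supp.ordConnected.out hu hv ⟨hux, hxv⟩

lemma sub_le_sub_of_density_le_deriv {h H : ℝ → ℝ} {z w : ℝ} (hfi : Integrable f)
    (hF : ∀ x, F x = ∫ t in Iic x, f t) (hzw : z ≤ w) (hH : ∀ u ∈ Icc z w, HasDerivAt H (h u) u)
    (hh : IntervalIntegrable h volume z w) (hle : ∀ u ∈ Icc z w, f u ≤ h u) :
    F w - F z ≤ H w - H z := by
  rw [hF, hF, intervalIntegral.integral_Iic_sub_Iic hfi.integrableOn hfi.integrableOn,
    ← intervalIntegral.integral_eq_sub_of_hasDerivAt (by rwa [uIcc_of_le hzw]) hh]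
  exact intervalIntegral.integral_mono_on hzw hfi.intervalIntegrable hh hle

lemma sub_le_sub_of_deriv_le_density {h H : ℝ → ℝ} {z w : ℝ} (hfi : Integrable f)
    (hF : ∀ x, F x = ∫ t in Iic x, f t) (hzw : z ≤ w) (hH : ∀ u ∈ Icc z w, HasDerivAt H (h u) u)
    (hh : IntervalIntegrable h volume z w) (hle : ∀ u ∈ Icc z w, h u ≤ f u) :
    H w - H z ≤ F w - F z := by
  rw [hF, hF, intervalIntegral.integral_Iic_sub_Iic hfi.integrableOn hfi.integrableOn,
    ← intervalIntegral.integral_eq_sub_of_hasDerivAt (by rwa [uIcc_of_le hzw]) hh]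
  exact intervalIntegral.integral_mono_on hzw hh hfi.intervalIntegrable hle

lemma le_of_density_le_deriv {h H : ℝ → ℝ} {x : ℝ} (hfi : Integrable f)
    (hF : ∀ x, F x = ∫ t in Iic x, f t) (hF_bot : Tendsto F atBot (nhds 0))
    (hH : ∀ u ≤ x, HasDerivAt H (h u) u) (hh : ∀ z ≤ x, IntervalIntegrable h volume z x)
    (hle : ∀ u ≤ x, f u ≤ h u) (hH_nonneg : ∀ u ≤ x, 0 ≤ H u) : F x ≤ H x := by
  have hbound : ∀ z ≤ x, F x - H x ≤ F z := fun z hzx => by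
    have := sub_le_sub_of_density_le_deriv hfi hF hzx (fun u hu => hH u hu.2) (hh z hzx)
      (fun u hu => hle u hu.2)
    linarith [hH_nonneg z hzx]
  have := ge_of_tendsto hF_bot (eventually_atBot.2 ⟨x, hbound⟩)
  linarith

lemma exists_pos_bounds_of_density_lt {s x y : ℝ} (hs₁ : -1 < s) (hs₂ : s < 0)
    (hf_nonneg : ∀ x, 0 ≤ f x) (hf_int : ∫ x, f x = 1)
    (hg : ConvexOn ℝ {x | 0 < f x} fun x => f x ^ s) (hF : ∀ x, F x = ∫ t in Iic x, f t)
    (hx : 0 < f x) (hy : 0 < f y) (hxy : x < y) (hfxy : f x < f y) :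
    ∃ c > 0, F x ≤ f x ^ (1 + s) / c ∧ f y ^ (1 + s) / c - f x ^ (1 + s) / c ≤ F y - F x := by
  have hfi : Integrable f := Integrable.of_integral_ne_zero (by simp [hf_int])
  set L := secant (fun u => f u ^ s) x y
  set m := slope (fun u => f u ^ s) x y
  have hm : m < 0 := by
    simp only [m, slope_def_field]
    exact div_neg_of_neg_of_pos (sub_neg.2 (Real.rpow_lt_rpow_of_neg hx hfxy hs₂)) (sub_pos.2 hxy)
  have hLy : L y = f y ^ s := secant_right hxy.ne
  have hL_pos : ∀ u ≤ y, 0 < L u := fun u hu => by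
    have : L u = L y + m * (u - y) := by simp only [L, m, secant]; ring
    nlinarith [Real.rpow_pos_of_pos hy s]
  set c := m * (s⁻¹ + 1)
  have hc : 0 < c := mul_pos_of_neg_of_neg hm (by
    rw [show s⁻¹ + 1 = (1 + s) / s by rw [add_div, div_self hs₂.ne, one_div, add_comm]]
    exact div_neg_of_pos_of_neg (by linarith) hs₂)
  set H := fun v => L v ^ (s⁻¹ + 1) / c
  have hH : ∀ u ≤ y, HasDerivAt H (L u ^ s⁻¹) u := fun u hu =>
    hasDerivAt_secant.rpow_add_one_div (hL_pos u hu) hc.ne'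
  have hH_eq : ∀ z, 0 < f z → L z = f z ^ s → H z = f z ^ (1 + s) / c := by
    intro z hz hLz
    simp only [H, hLz, ← Real.rpow_mul hz.le]
    rw [mul_add, mul_inv_cancel₀ hs₂.ne, mul_one, add_comm]
  have hint : ∀ z w, z ≤ w → w ≤ y → IntervalIntegrable (fun u => L u ^ s⁻¹) volume z w :=
    fun z w hzw hwy => ContinuousOn.intervalIntegrable_of_Icc hzw fun u hu =>
      (hasDerivAt_secant.continuousAt.rpow_const
        (Or.inl (hL_pos u (hu.2.trans hwy)).ne')).continuousWithinAt
  have hbelow : ∀ u ≤ x, f u ≤ L u ^ s⁻¹ := by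
    intro u hux
    have hLu := hL_pos u (hux.trans hxy.le)
    rcases (hf_nonneg u).eq_or_lt with hu | hu
    · rw [← hu]
      exact (Real.rpow_pos_of_pos hLu _).le
    exact (Real.le_rpow_inv_iff_of_neg hu hLu hs₂).2 (hg.secant_le_of_le hx hy hu hxy hux)
  have habove : ∀ u ∈ Icc x y, L u ^ s⁻¹ ≤ f u := fun u hu =>
    (Real.rpow_inv_le_iff_of_neg (hL_pos u hu.2) (hg.1.ordConnected.out hx hy hu) hs₂).2
      (hg.le_secant_of_mem_Icc hx hy hu)
  refine ⟨c, hc, ?_, ?_⟩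
  · rw [← hH_eq x hx secant_left]
    exact le_of_density_le_deriv hfi hF (isDistFun_of_density hf_nonneg hf_int hF).2.2.2.1
      (fun u hu => hH u (hu.trans hxy.le)) (fun z hz => hint z x hz hxy.le) hbelow
      (fun u hu => (div_pos (Real.rpow_pos_of_pos (hL_pos u (hu.trans hxy.le)) _) hc).le)
  · rw [← hH_eq x hx secant_left, ← hH_eq y hy hLy]
    exact sub_le_sub_of_deriv_le_density hfi hF hxy.le (fun u hu => hH u hu.2)
      (hint x y hxy.le le_rfl) habove

theorem rpow_mul_le_rpow_mul_of_density {s x y : ℝ} (hs₁ : -1 < s) (hs₂ : s < 0)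
    (hf_nonneg : ∀ x, 0 ≤ f x) (hf_int : ∫ x, f x = 1)
    (hg : ConvexOn ℝ {x | 0 < f x} fun x => f x ^ s) (hF : ∀ x, F x = ∫ t in Iic x, f t)
    (hx : 0 < f x) (hy : 0 < f y) (hxy : x ≤ y) :
    f y ^ (1 + s) * F x ≤ f x ^ (1 + s) * F y := by
  obtain ⟨hF_mono, hF_bds, -⟩ := isDistFun_of_density hf_nonneg hf_int hF
  set A := f x ^ (1 + s)
  set B := f y ^ (1 + s)
  have hA : 0 ≤ A := Real.rpow_nonneg hx.le _
  rcases le_or_gt (f y) (f x) with hyx | hxy'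
  · exact mul_le_mul (Real.rpow_le_rpow hy.le hyx (by linarith)) (hF_mono hxy) (hF_bds x).1 hA
  obtain ⟨c, hc, hFx, hFxy⟩ := exists_pos_bounds_of_density_lt hs₁ hs₂ hf_nonneg hf_int hg hF
    hx hy (hxy.lt_of_ne (by rintro rfl; exact lt_irrefl _ hxy')) hxy'
  have hAB : A ≤ B := Real.rpow_le_rpow hx.le hxy'.le (by linarith)
  calc B * F x = A * F x + (B - A) * F x := by ring
    _ ≤ A * F x + (B - A) * (A / c) := by gcongr
    _ = A * F x + A * (B / c - A / c) := by ring
    _ ≤ A * F x + A * (F y - F x) := by gcongr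
    _ = A * F y := by ring

theorem convexOn_rpow_of_density {s : ℝ} (hs₁ : -1 < s) (hs₂ : s < 0)
    (hf_nonneg : ∀ x, 0 ≤ f x) (hf_int : ∫ x, f x = 1)
    (hg : ConvexOn ℝ {x | 0 < f x} fun x => f x ^ s) (hF : ∀ x, F x = ∫ t in Iic x, f t) :
    ConvexOn ℝ (JSet F) fun x => F x ^ (s / (1 + s)) := by
  have h1s : 0 < 1 + s := by linarith
  have hfi : Integrable f := Integrable.of_integral_ne_zero (by simp [hf_int])
  have hFc := continuous_of_density hfi hF
  have hJ_open : IsOpen (JSet F) := isOpen_Ioo.preimage hFc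
  have hJ_conv : Convex ℝ (JSet F) :=
    (ordConnected_Ioo.preimage_mono (isDistFun_of_density hf_nonneg hf_int hF).1).convex
  have hf_pos : ∀ x ∈ JSet F, 0 < f x := fun x hx => pos_of_mem_JSet hg.1 hf_nonneg hf_int hF hx
  have hf_cont : ContinuousOn f (JSet F) :=
    continuousOn_of_convexOn_rpow hs₂.ne hJ_open (hg.subset hf_pos hJ_conv) hf_pos
  have hderiv : ∀ x ∈ JSet F, HasDerivAt (fun x => F x ^ (s / (1 + s)))
      (s / (1 + s) * (f x ^ (1 + s) / F x) ^ (1 + s)⁻¹) x := fun x hx => by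
    convert (hasDerivAt_of_density hfi hF (hf_cont.continuousAt (hJ_open.mem_nhds hx))).rpow_const
      (p := s / (1 + s)) (Or.inl hx.1.ne') using 1
    rw [Real.div_rpow (Real.rpow_nonneg (hf_pos x hx).le _) hx.1.le, ← Real.rpow_mul
      (hf_pos x hx).le, mul_inv_cancel₀ h1s.ne', Real.rpow_one,
      show s / (1 + s) - 1 = -(1 + s)⁻¹ by field_simp; ring, Real.rpow_neg hx.1.le]
    ring
  refine MonotoneOn.convexOn_of_deriv hJ_conv
    (hFc.continuousOn.rpow_const fun x hx => Or.inl hx.1.ne') ?_ ?_ <;> rw [hJ_open.interior_eq]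
  · exact fun x hx => (hderiv x hx).differentiableAt.differentiableWithinAt
  · intro x hx y hy hxy
    rw [(hderiv x hx).deriv, (hderiv y hy).deriv]
    have hratio : f y ^ (1 + s) / F y ≤ f x ^ (1 + s) / F x := by
      rw [div_le_div_iff₀ hy.1 hx.1]
      exact rpow_mul_le_rpow_mul_of_density hs₁ hs₂ hf_nonneg hf_int hg hF (hf_pos x hx)
        (hf_pos y hy) hxy
    exact mul_le_mul_of_nonpos_left (Real.rpow_le_rpow
      (div_nonneg (Real.rpow_nonneg (hf_pos y hy).le _) hy.1.le) hratio (inv_pos.2 h1s).le)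
      (div_neg_of_neg_of_pos hs₂ h1s).le

end Density

lemma convexOn_one_sub_rpow_of_comp_neg {F : ℝ → ℝ} {t : ℝ}
    (h : ConvexOn ℝ (JSet fun x => 1 - F (-x)) fun x => (1 - F (-x)) ^ t) :
    ConvexOn ℝ (JSet F) fun x => (1 - F x) ^ t := by
  have hJ : JSet F = (-LinearMap.id : ℝ →ₗ[ℝ] ℝ) ⁻¹' JSet fun x => 1 - F (-x) := by
    ext x
    simp only [JSet, mem_preimage, mem_ofPred_eq, LinearMap.neg_apply, LinearMap.id_apply, neg_neg]
    constructor <;> rintro ⟨h₁, h₂⟩ <;> constructor <;> linarith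
  have h' := h.comp_linearMap (-LinearMap.id)
  rw [← hJ] at h'
  simpa [Function.comp_def] using h'

theorem biSStarConcave_of_sConcave_density_neg_general
    (s : ℝ) (hs₁ : -1 < s) (hs₂ : s < 0)
    (f : ℝ → ℝ) (hf_nonneg : ∀ x, 0 ≤ f x)
    (hf_int : ∫ x, f x = 1)
    (hf_sconc : ∀ x y θ : ℝ, 0 < f x → 0 < f y → 0 < θ → θ < 1 →
      ((1 - θ) * f x ^ s + θ * f y ^ s) ^ (1 / s) ≤ f ((1 - θ) * x + θ * y))
    (F : ℝ → ℝ) (hF_def : ∀ x, F x = ∫ t in Iic x, f t)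
    (t : ℝ) (ht : t ≤ s / (1 + s)) :
    IsDistFun F ∧ IsBiSStarConcave t F := by
  have hκ : s / (1 + s) < 0 := div_neg_of_neg_of_pos hs₂ (by linarith)
  have hg := convexOn_rpow_of_sConcave hs₂ hf_sconc
  have hF_left := convexOn_rpow_of_density hs₁ hs₂ hf_nonneg hf_int hg hF_def
  have hF_right := convexOn_rpow_of_density hs₁ hs₂ (fun x => hf_nonneg (-x))
    ((integral_neg_eq_self f volume).trans hf_int) (hg.comp_linearMap (-LinearMap.id))
    (one_sub_comp_neg_of_density hf_int hF_def)
  refine ⟨isDistFun_of_density hf_nonneg hf_int hF_def,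
    continuous_of_density (Integrable.of_integral_ne_zero (by simp [hf_int])) hF_def,
    fun _ => ⟨hF_left.rpow_of_le_of_neg (fun x hx => hx.1) hκ ht,
      convexOn_one_sub_rpow_of_comp_neg (hF_right.rpow_of_le_of_neg (fun x hx => hx.1) hκ ht)⟩,
    fun h => by linarith, fun h => by linarith⟩

/-- If `f` is an `s`-concave probability density with `s ∈ (-1, 0)`, then its
distribution function `F(x) = ∫_{-∞}^x f` is a bi-`s*`-concave distribution function for every
`s* ≤ s / (1 + s)`. -/
theorem biSStarConcave_of_sConcave_density_neg
    (s : ℝ) (hs₁ : -1 < s) (hs₂ : s < 0)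
    (f : ℝ → ℝ) (hf_meas : Measurable f) (hf_nonneg : ∀ x, 0 ≤ f x)
    (hf_int : ∫ x, f x = 1)
    (hf_sconc : ∀ x y θ : ℝ, 0 < f x → 0 < f y → 0 < θ → θ < 1 →
      ((1 - θ) * f x ^ s + θ * f y ^ s) ^ (1 / s) ≤ f ((1 - θ) * x + θ * y))
    (F : ℝ → ℝ) (hF_def : ∀ x, F x = ∫ t in Iic x, f t)
    (t : ℝ) (ht : t ≤ s / (1 + s)) :
    IsDistFun F ∧ IsBiSStarConcave t F :=
  biSStarConcave_of_sConcave_density_neg_general s hs₁ hs₂ f hf_nonneg hf_int hf_sconc F hF_def t ht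
end

section
/- The bi-s*-concave classes are nested: if t* ≤ s* ≤ 1 and F is a non-degenerate bi-s*-concave distribution function, then F is bi-t*-concave; that is, P_{s*} ⊆ P_{t*} whenever t* ≤ s* ≤ 1. -/
/-!
For a positive function `G`, `s`-concavity implies `t`-concavity when `t ≤ s`: write
`G ^ t = (G ^ s) ^ (t / s)` when `s, t` have the same sign, `log G = s⁻¹ log (G ^ s)` for `s > 0`
and `G ^ t = exp (t log G)` for `t < 0`, and compose with the monotone functions `y ↦ y ^ (t / s)`,
`log` and `exp`, which are concave or convex as needed. Apply this to `F` and `1 - F`, both positive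
on `J(F)`.
-/

open Set MeasureTheory Filter
open scoped NNReal ENNReal

section Composition

variable {𝕜 E β γ : Type*} [Semiring 𝕜] [PartialOrder 𝕜] [AddCommMonoid E] [SMul 𝕜 E]
  [AddCommMonoid β] [PartialOrder β] [SMul 𝕜 β] [AddCommMonoid γ] [PartialOrder γ] [SMul 𝕜 γ]
  {s : Set E} {t : Set β} {f : E → β} {g : β → γ}

-- Unlike `ConvexOn.comp`, the outer function only needs to be convex on some convex set
-- containing `f '' s`, which need not itself be convex.
theorem ConvexOn.comp_of_mapsTo (hg : ConvexOn 𝕜 t g) (hf : ConvexOn 𝕜 s f)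
    (hg' : MonotoneOn g t) (hst : MapsTo f s t) : ConvexOn 𝕜 s (g ∘ f) :=
  ⟨hf.1, fun _ hx _ hy _ _ ha hb hab =>
    (hg' (hst <| hf.1 hx hy ha hb hab) (hg.1 (hst hx) (hst hy) ha hb hab)
      (hf.2 hx hy ha hb hab)).trans (hg.2 (hst hx) (hst hy) ha hb hab)⟩

theorem ConcaveOn.comp_of_mapsTo (hg : ConcaveOn 𝕜 t g) (hf : ConcaveOn 𝕜 s f)
    (hg' : MonotoneOn g t) (hst : MapsTo f s t) : ConcaveOn 𝕜 s (g ∘ f) :=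
  ⟨hf.1, fun _ hx _ hy _ _ ha hb hab =>
    (hg.2 (hst hx) (hst hy) ha hb hab).trans
      (hg' (hg.1 (hst hx) (hst hy) ha hb hab) (hst <| hf.1 hx hy ha hb hab)
        (hf.2 hx hy ha hb hab))⟩

end Composition

def SConcaveOn (s : ℝ) (S : Set ℝ) (G : ℝ → ℝ) : Prop :=
  (s < 0 → ConvexOn ℝ S (fun x => G x ^ s)) ∧
  (s = 0 → ConcaveOn ℝ S (fun x => Real.log (G x))) ∧
  (0 < s → ConcaveOn ℝ S (fun x => G x ^ s))

theorem isBiSStarConcave_iff {s : ℝ} {F : ℝ → ℝ} :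
    IsBiSStarConcave s F ↔
      Continuous F ∧ SConcaveOn s (JSet F) F ∧ SConcaveOn s (JSet F) (fun x => 1 - F x) := by
  unfold IsBiSStarConcave SConcaveOn
  grind

section PowerComparison

open Real

variable {S : Set ℝ} {G : ℝ → ℝ} {s t : ℝ}

theorem convexOn_rpow_of_convexOn_rpow (hG : ∀ x ∈ S, 0 < G x) (hts : t ≤ s) (hs : s < 0)
    (h : ConvexOn ℝ S (fun x => G x ^ s)) : ConvexOn ℝ S (fun x => G x ^ t) := by
  have hp : 1 ≤ t / s := by rwa [one_le_div_of_neg hs]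
  refine ((convexOn_rpow hp).comp_of_mapsTo h
    (fun a ha b _ hab => rpow_le_rpow ha hab (by linarith))
    (fun x hx => rpow_nonneg (hG x hx).le s)).congr fun x hx => ?_
  simp only [Function.comp_apply, ← rpow_mul (hG x hx).le, mul_div_cancel₀ t hs.ne]

theorem concaveOn_rpow_of_concaveOn_rpow (hG : ∀ x ∈ S, 0 < G x) (ht : 0 < t) (hts : t ≤ s)
    (h : ConcaveOn ℝ S (fun x => G x ^ s)) : ConcaveOn ℝ S (fun x => G x ^ t) := by
  have hs : 0 < s := ht.trans_le hts
  have hp : t / s ≤ 1 := by rwa [div_le_one hs]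
  refine ((concaveOn_rpow (by positivity) hp).comp_of_mapsTo h
    (fun a ha b _ hab => rpow_le_rpow ha hab (by positivity))
    (fun x hx => rpow_nonneg (hG x hx).le s)).congr fun x hx => ?_
  simp only [Function.comp_apply, ← rpow_mul (hG x hx).le, mul_div_cancel₀ t hs.ne']

theorem concaveOn_log_of_concaveOn_rpow (hG : ∀ x ∈ S, 0 < G x) (hs : 0 < s)
    (h : ConcaveOn ℝ S (fun x => G x ^ s)) : ConcaveOn ℝ S (fun x => log (G x)) := by
  refine ((strictConcaveOn_log_Ioi.concaveOn.comp_of_mapsTo h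
    (fun a ha _ _ hab => log_le_log ha hab)
    (fun x hx => rpow_pos_of_pos (hG x hx) s)).smul (inv_nonneg.2 hs.le)).congr fun x hx => ?_
  simp only [Function.comp_apply, smul_eq_mul, log_rpow (hG x hx), inv_mul_cancel_left₀ hs.ne']

theorem convexOn_rpow_of_concaveOn_log (hG : ∀ x ∈ S, 0 < G x) (ht : t < 0)
    (h : ConcaveOn ℝ S (fun x => log (G x))) : ConvexOn ℝ S (fun x => G x ^ t) := by
  refine (convexOn_exp.comp_of_mapsTo (h.neg.smul (neg_nonneg.2 ht.le))
    (exp_monotone.monotoneOn _) (mapsTo_univ _ _)).congr fun x hx => ?_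
  simp only [Function.comp_apply, smul_eq_mul, Pi.neg_apply, neg_mul_neg,
    rpow_def_of_pos (hG x hx), mul_comm]

theorem SConcaveOn.anti (hG : ∀ x ∈ S, 0 < G x) (hts : t ≤ s) (h : SConcaveOn s S G) :
    SConcaveOn t S G := by
  have hlog : 0 ≤ s → ConcaveOn ℝ S (fun x => log (G x)) := fun hs =>
    hs.eq_or_lt.elim (fun h0 => h.2.1 h0.symm)
      (fun h0 => concaveOn_log_of_concaveOn_rpow hG h0 (h.2.2 h0))
  refine ⟨fun ht => ?_, fun ht => hlog (ht ▸ hts), fun ht =>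
    concaveOn_rpow_of_concaveOn_rpow hG ht hts (h.2.2 (ht.trans_le hts))⟩
  rcases lt_or_ge s 0 with hs | hs
  · exact convexOn_rpow_of_convexOn_rpow hG hts hs (h.1 hs)
  · exact convexOn_rpow_of_concaveOn_log hG ht (hlog hs)

end PowerComparison

theorem biSStarConcave_nested_general
    (s t : ℝ) (hts : t ≤ s)
    (F : ℝ → ℝ)
    (hbi : IsBiSStarConcave s F) :
    IsBiSStarConcave t F := by
  obtain ⟨hcont, hsF, hs1F⟩ := isBiSStarConcave_iff.1 hbi
  exact isBiSStarConcave_iff.2 ⟨hcont, hsF.anti (fun _ hx => hx.1) hts,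
    hs1F.anti (fun _ hx => sub_pos.2 hx.2) hts⟩

/-- Nestedness of the bi-`s*`-concave classes: if `t* ≤ s* ≤ 1` and `F` is a
non-degenerate bi-`s*`-concave distribution function, then `F` is bi-`t*`-concave. -/
theorem biSStarConcave_nested
    (s t : ℝ) (hts : t ≤ s) (hs : s ≤ 1)
    (F : ℝ → ℝ) (hF : IsDistFun F) (hnd : NonDeg F)
    (hbi : IsBiSStarConcave s F) :
    IsBiSStarConcave t F :=
  biSStarConcave_nested_general s t hts F hbi
end

section
/- Continuity of the bi-s*-concave classes at s* = 0 from below: a non-degenerate distribution function F is bi-log-concave (i.e. bi-0-concave) if and only if F is bi-s*-concave for every s* < 0; that is, P_0 = ⋂_{s* < 0} P_{s*} (restricted to non-degenerate distribution functions). -/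
open Set MeasureTheory Filter
open scoped NNReal ENNReal

/-! If `log g` is concave and `s < 0`, then `g ^ s = exp (s * log g)` is convex, as `exp` is convex
and increasing and `s * log g` is convex. Conversely, for `s < 0` convexity of `g ^ s` makes
`(g ^ s - 1) / s` concave, and these functions tend pointwise to `log g` as `s → 0⁻` (the derivative
of `s ↦ c ^ s` at `0` is `log c`); a pointwise limit of concave functions is concave. -/

open Topology

section

variable {E : Type*} [AddCommMonoid E] [Module ℝ E] {S : Set E}

theorem ConcaveOn.of_tendsto {ι : Type*} {l : Filter ι} [l.NeBot] {f : ι → E → ℝ} {g : E → ℝ}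
    (hf : ∀ᶠ i in l, ConcaveOn ℝ S (f i)) (hlim : ∀ x ∈ S, Tendsto (fun i => f i x) l (𝓝 (g x))) :
    ConcaveOn ℝ S g := by
  obtain ⟨i, hi⟩ := hf.exists
  refine ⟨hi.1, fun x hx y hy a b ha hb hab => ?_⟩
  exact le_of_tendsto_of_tendsto (((hlim x hx).const_smul a).add ((hlim y hy).const_smul b))
    (hlim _ (hi.1 hx hy ha hb hab)) (hf.mono fun j hj => hj.2 hx hy ha hb hab)

theorem Real.tendsto_rpow_sub_one_div_nhdsNE_zero {c : ℝ} (hc : 0 < c) :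
    Tendsto (fun s : ℝ => (c ^ s - 1) / s) (𝓝[≠] 0) (𝓝 (Real.log c)) := by
  have := hasDerivAt_iff_tendsto_slope.mp (Real.hasStrictDerivAt_const_rpow hc 0).hasDerivAt
  rw [Real.rpow_zero, one_mul] at this
  exact this.congr fun s => by rw [slope_def_field, Real.rpow_zero, sub_zero]

theorem ConcaveOn.convexOn_rpow_of_neg {g : E → ℝ} (hg : ∀ x ∈ S, 0 < g x)
    (hc : ConcaveOn ℝ S fun x => Real.log (g x)) {s : ℝ} (hs : s < 0) :
    ConvexOn ℝ S fun x => g x ^ s := by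
  refine ⟨hc.1, fun x hx y hy a b ha hb hab => ?_⟩
  simp only [Real.rpow_def_of_pos (hg _ _), hx, hy, hc.1 hx hy ha hb hab, smul_eq_mul]
  calc Real.exp (Real.log (g (a • x + b • y)) * s)
      ≤ Real.exp ((a * Real.log (g x) + b * Real.log (g y)) * s) :=
        Real.exp_le_exp.2 (mul_le_mul_of_nonpos_right (hc.2 hx hy ha hb hab) hs.le)
    _ = Real.exp (a * (Real.log (g x) * s) + b * (Real.log (g y) * s)) := by ring_nf
    _ ≤ a * Real.exp (Real.log (g x) * s) + b * Real.exp (Real.log (g y) * s) :=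
        convexOn_exp.2 (mem_univ _) (mem_univ _) ha hb hab

theorem concaveOn_log_of_forall_neg_convexOn_rpow {g : E → ℝ} (hg : ∀ x ∈ S, 0 < g x)
    (h : ∀ s : ℝ, s < 0 → ConvexOn ℝ S fun x => g x ^ s) :
    ConcaveOn ℝ S fun x => Real.log (g x) := by
  have hquot : ∀ s : ℝ, s < 0 → ConcaveOn ℝ S fun x => (g x ^ s - 1) / s := fun s hs => by
    refine (((h s hs).neg.smul (inv_nonneg.2 (neg_nonneg.2 hs.le))).add_const (-s)⁻¹).congr
      fun x _ => ?_
    simp only [Pi.add_apply, Pi.neg_apply, smul_eq_mul]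
    field_simp
    ring
  exact ConcaveOn.of_tendsto (l := 𝓝[<] 0) (eventually_nhdsWithin_of_forall hquot)
    fun x hx => (Real.tendsto_rpow_sub_one_div_nhdsNE_zero (hg x hx)).mono_left
      (nhdsWithin_mono _ fun _ hs => ne_of_lt hs)

theorem concaveOn_log_iff_forall_neg_convexOn_rpow {g : E → ℝ} (hg : ∀ x ∈ S, 0 < g x) :
    (ConcaveOn ℝ S fun x => Real.log (g x)) ↔ ∀ s : ℝ, s < 0 → ConvexOn ℝ S fun x => g x ^ s :=
  ⟨fun hc _ hs => hc.convexOn_rpow_of_neg hg hs, concaveOn_log_of_forall_neg_convexOn_rpow hg⟩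

end

theorem isBiSStarConcave_zero_iff {F : ℝ → ℝ} :
    IsBiSStarConcave 0 F ↔ Continuous F ∧ (ConcaveOn ℝ (JSet F) fun x => Real.log (F x)) ∧
      ConcaveOn ℝ (JSet F) fun x => Real.log (1 - F x) := by
  simp [IsBiSStarConcave]

theorem isBiSStarConcave_iff_of_neg {s : ℝ} (hs : s < 0) {F : ℝ → ℝ} :
    IsBiSStarConcave s F ↔ Continuous F ∧ (ConvexOn ℝ (JSet F) fun x => F x ^ s) ∧
      ConvexOn ℝ (JSet F) fun x => (1 - F x) ^ s := by
  simp [IsBiSStarConcave, hs, hs.ne, hs.not_gt]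

theorem biSStarConcave_continuity_at_zero_general
    (F : ℝ → ℝ) :
    IsBiSStarConcave 0 F ↔ ∀ s : ℝ, s < 0 → IsBiSStarConcave s F := by
  rw [isBiSStarConcave_zero_iff,
    concaveOn_log_iff_forall_neg_convexOn_rpow (g := F) fun _ hx => hx.1,
    concaveOn_log_iff_forall_neg_convexOn_rpow (g := fun x => 1 - F x) fun _ hx => sub_pos.2 hx.2]
  refine ⟨fun ⟨hcont, hF, hF'⟩ s hs =>
    (isBiSStarConcave_iff_of_neg hs).2 ⟨hcont, hF s hs, hF' s hs⟩, fun h => ?_⟩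
  have hneg (s : ℝ) (hs : s < 0) := (isBiSStarConcave_iff_of_neg hs).1 (h s hs)
  exact ⟨(hneg (-1) neg_one_lt_zero).1, fun s hs => (hneg s hs).2.1, fun s hs => (hneg s hs).2.2⟩

/-- Continuity at `s* = 0` from below: a non-degenerate distribution function is
bi-log-concave (bi-`0`-concave) iff it is bi-`s*`-concave for every `s* < 0`. -/
theorem biSStarConcave_continuity_at_zero
    (F : ℝ → ℝ) (hF : IsDistFun F) (hnd : NonDeg F) :
    IsBiSStarConcave 0 F ↔ ∀ s : ℝ, s < 0 → IsBiSStarConcave s F :=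
  biSStarConcave_continuity_at_zero_general F
end

section
/- (Theorem 3, (i) ⇒ (ii).) Let s* ≤ 1 with s* ≠ 0 and let F be a non-degenerate bi-s*-concave distribution function. Then F is differentiable at every point of J(F), with derivative f = F′, and for all x, y ∈ J(F): (1/s*) F(y)^{s*} ≤ (1/s*) F(x)^{s*} + F(x)^{s*−1} f(x) (y − x), and (1/s*) (1−F(y))^{s*} ≤ (1/s*) (1−F(x))^{s*} − (1−F(x))^{s*−1} f(x) (y − x). -/
open Set MeasureTheory Filter
open scoped NNReal ENNReal

/-!
On the open interval `J(F)` the functions `F ^ s / s` and `(1 - F) ^ s / s` are concave, so each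
has one-sided derivatives with the right one at most the left one. Both `F` and `1 - F` are
recovered from them through the increasing map `v ↦ (s v) ^ (1 / s)`, which preserves this
ordering. Applied to `F` and to `1 - F` it gives `F'₊ ≤ F'₋` and `F'₋ ≤ F'₊`, so `F` is
differentiable on `J(F)`, and the inequalities are the tangent-line bounds of the two concave
functions.
-/

open Topology

/-- `f` has a left derivative at `x` and a right derivative not exceeding it, as a concave
function does at interior points of its domain. -/
def HasConcaveKinkAt (f : ℝ → ℝ) (x : ℝ) : Prop :=
  ∃ a b, b ≤ a ∧ HasDerivWithinAt f a (Iio x) x ∧ HasDerivWithinAt f b (Ioi x) x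

section Kink

variable {f g φ : ℝ → ℝ} {x p : ℝ}

theorem ConcaveOn.hasConcaveKinkAt {S : Set ℝ} (hf : ConcaveOn ℝ S f) (hx : x ∈ interior S) :
    HasConcaveKinkAt f x := by
  have hf' := hf.neg
  refine ⟨-derivWithin (-f) (Iio x) x, -derivWithin (-f) (Ioi x) x,
    neg_le_neg (hf'.leftDeriv_le_rightDeriv_of_mem_interior hx), ?_, ?_⟩
  · simpa using (hf'.hasDerivWithinAt_leftDeriv_of_mem_interior hx).neg
  · simpa using (hf'.hasDerivWithinAt_rightDeriv_of_mem_interior hx).neg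

theorem HasConcaveKinkAt.comp (hf : HasConcaveKinkAt f x) (hφ : HasDerivAt φ p (f x))
    (hp : 0 ≤ p) : HasConcaveKinkAt (φ ∘ f) x := by
  obtain ⟨a, b, hba, ha, hb⟩ := hf
  exact ⟨p * a, p * b, mul_le_mul_of_nonneg_left hba hp,
    hφ.comp_hasDerivWithinAt x ha, hφ.comp_hasDerivWithinAt x hb⟩

theorem HasConcaveKinkAt.congr_of_eventuallyEq (hf : HasConcaveKinkAt f x) (h : g =ᶠ[𝓝 x] f) :
    HasConcaveKinkAt g x := by
  obtain ⟨a, b, hba, ha, hb⟩ := hf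
  exact ⟨a, b, hba, ha.congr_of_eventuallyEq (h.filter_mono nhdsWithin_le_nhds) h.eq_of_nhds,
    hb.congr_of_eventuallyEq (h.filter_mono nhdsWithin_le_nhds) h.eq_of_nhds⟩

theorem HasConcaveKinkAt.differentiableAt_of_const_sub {c : ℝ} (hf : HasConcaveKinkAt f x)
    (hcf : HasConcaveKinkAt (fun t => c - f t) x) : DifferentiableAt ℝ f x := by
  obtain ⟨a, b, hba, ha, hb⟩ := hf
  obtain ⟨a', b', hba', ha', hb'⟩ := hcf
  have hleft : a' = -a := (uniqueDiffWithinAt_Iio x).eq_deriv _ ha' (ha.const_sub c)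
  have hright : b' = -b := (uniqueDiffWithinAt_Ioi x).eq_deriv _ hb' (hb.const_sub c)
  obtain rfl : a = b := by linarith
  rw [hasDerivWithinAt_iff_tendsto_slope' self_notMem_Iio] at ha
  rw [hasDerivWithinAt_iff_tendsto_slope' self_notMem_Ioi] at hb
  exact (hasDerivAt_iff_tendsto_slope_left_right.2 ⟨ha, hb⟩).differentiableAt

end Kink

section PowerConcave

variable {S : Set ℝ} {g : ℝ → ℝ} {s x : ℝ}

theorem concaveOn_one_div_mul_of_sign (hs : s ≠ 0) (hneg : s < 0 → ConvexOn ℝ S g)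
    (hpos : 0 < s → ConcaveOn ℝ S g) : ConcaveOn ℝ S fun t => 1 / s * g t := by
  rcases hs.lt_or_gt with h | h
  · have hc : ConvexOn ℝ S fun t => -(1 / s) * g t :=
      (hneg h).smul (neg_nonneg.2 (one_div_neg.2 h).le)
    exact neg_convexOn_iff.1 (by simpa only [Pi.neg_def, neg_mul] using hc)
  · simpa using (hpos h).smul (one_div_pos.2 h).le

theorem hasConcaveKinkAt_of_concaveOn_one_div_mul_rpow (hs : s ≠ 0) (hS : S ∈ 𝓝 x)
    (hg : ∀ t ∈ S, 0 < g t) (hc : ConcaveOn ℝ S fun t => 1 / s * g t ^ s) :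
    HasConcaveKinkAt g x := by
  have hgx : 0 < g x := hg x (mem_of_mem_nhds hS)
  set u := fun t => 1 / s * g t ^ s
  have hux : s * u x = g x ^ s := by simp [u, hs]
  have hroot : ∀ t ∈ S, (s * u t) ^ (1 / s) = g t := fun t ht => by
    simp only [u, ← mul_assoc, mul_one_div_cancel hs, one_mul]
    rw [← Real.rpow_mul (hg t ht).le, mul_one_div_cancel hs, Real.rpow_one]
  have hφ : HasDerivAt (fun v => (s * v) ^ (1 / s)) (s * 1 * (1 / s) * (s * u x) ^ (1 / s - 1))
      (u x) :=
    ((hasDerivAt_id' (u x)).const_mul s).rpow_const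
      (Or.inl (hux ▸ (Real.rpow_pos_of_pos hgx s).ne'))
  have hp : 0 ≤ s * 1 * (1 / s) * (s * u x) ^ (1 / s - 1) := by
    rw [mul_one, mul_one_div_cancel hs, one_mul, hux]
    exact Real.rpow_nonneg (Real.rpow_nonneg hgx.le s) _
  have hkink : HasConcaveKinkAt u x := hc.hasConcaveKinkAt (mem_interior_iff_mem_nhds.2 hS)
  refine (hkink.comp hφ hp).congr_of_eventuallyEq ?_
  filter_upwards [hS] with t ht
  exact (hroot t ht).symm

theorem ConcaveOn.le_add_mul_sub_of_hasDerivAt {f : ℝ → ℝ} {y d : ℝ}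
    (hf : ConcaveOn ℝ S f) (hx : x ∈ S) (hy : y ∈ S) (hd : HasDerivAt f d x) :
    f y ≤ f x + d * (y - x) := by
  rcases lt_trichotomy x y with hxy | rfl | hyx
  · have h := hf.slope_le_of_hasDerivAt hx hy hxy hd
    rw [slope_def_field, div_le_iff₀ (sub_pos.2 hxy)] at h
    linarith
  · simp
  · have h := hf.le_slope_of_hasDerivAt hy hx hyx hd
    rw [slope_def_field, le_div_iff₀ (sub_pos.2 hyx)] at h
    linarith

theorem le_tangent_of_concaveOn_one_div_mul_rpow {y d : ℝ} (hs : s ≠ 0)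
    (hc : ConcaveOn ℝ S fun t => 1 / s * g t ^ s) (hx : x ∈ S) (hy : y ∈ S) (hgx : 0 < g x)
    (hd : HasDerivAt g d x) :
    1 / s * g y ^ s ≤ 1 / s * g x ^ s + g x ^ (s - 1) * d * (y - x) := by
  have hd' := (hd.rpow_const (p := s) (Or.inl hgx.ne')).const_mul (1 / s)
  convert hc.le_add_mul_sub_of_hasDerivAt hx hy hd' using 3
  field_simp

end PowerConcave

theorem isOpen_JSet {F : ℝ → ℝ} (hF : Continuous F) : IsOpen (JSet F) :=
  isOpen_Ioo.preimage hF

theorem IsBiSStarConcave.concaveOn_one_div_mul_rpow {s : ℝ} {F : ℝ → ℝ} (hs : s ≠ 0)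
    (hF : IsBiSStarConcave s F) :
    ConcaveOn ℝ (JSet F) (fun t => 1 / s * F t ^ s) ∧
      ConcaveOn ℝ (JSet F) (fun t => 1 / s * (1 - F t) ^ s) := by
  obtain ⟨-, hneg, -, hpos⟩ := hF
  exact ⟨concaveOn_one_div_mul_of_sign hs (fun h => (hneg h).1) (fun h => (hpos h).1),
    concaveOn_one_div_mul_of_sign hs (fun h => (hneg h).2) (fun h => (hpos h).2)⟩

theorem biSStarConcave_implies_tangent_bounds_general
    (s : ℝ) (hs0 : s ≠ 0)
    (F : ℝ → ℝ)
    (hbi : IsBiSStarConcave s F) :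
    Continuous F ∧
    (∀ x ∈ JSet F, DifferentiableAt ℝ F x) ∧
    (∀ x ∈ JSet F, ∀ y ∈ JSet F,
      (1 / s) * F y ^ s ≤ (1 / s) * F x ^ s + F x ^ (s - 1) * deriv F x * (y - x) ∧
      (1 / s) * (1 - F y) ^ s ≤
        (1 / s) * (1 - F x) ^ s - (1 - F x) ^ (s - 1) * deriv F x * (y - x)) := by
  have hJ := isOpen_JSet hbi.1
  obtain ⟨hF, h1F⟩ := hbi.concaveOn_one_div_mul_rpow hs0
  have hdiff : ∀ x ∈ JSet F, DifferentiableAt ℝ F x := by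
    intro x hx
    have hkinkF : HasConcaveKinkAt F x :=
      hasConcaveKinkAt_of_concaveOn_one_div_mul_rpow hs0 (hJ.mem_nhds hx) (fun t ht => ht.1) hF
    have hkink1F : HasConcaveKinkAt (fun t => 1 - F t) x :=
      hasConcaveKinkAt_of_concaveOn_one_div_mul_rpow hs0 (hJ.mem_nhds hx)
        (fun t ht => sub_pos.2 ht.2) h1F
    exact hkinkF.differentiableAt_of_const_sub hkink1F
  refine ⟨hbi.1, hdiff, fun x hx y hy => ⟨?_, ?_⟩⟩
  · exact le_tangent_of_concaveOn_one_div_mul_rpow hs0 hF hx hy hx.1 (hdiff x hx).hasDerivAt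
  · have h := le_tangent_of_concaveOn_one_div_mul_rpow hs0 h1F hx hy (sub_pos.2 hx.2)
      ((hdiff x hx).hasDerivAt.const_sub 1)
    linarith

/-- Theorem 3, (i) ⇒ (ii): a non-degenerate bi-`s*`-concave distribution function
(`s* ≤ 1`, `s* ≠ 0`) is differentiable on `J(F)` and satisfies the tangent-line inequalities for
`F ^ s* / s*` and `(1 - F) ^ s* / s*` there. -/
theorem biSStarConcave_implies_tangent_bounds
    (s : ℝ) (hs : s ≤ 1) (hs0 : s ≠ 0)
    (F : ℝ → ℝ) (hF : IsDistFun F) (hnd : NonDeg F)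
    (hbi : IsBiSStarConcave s F) :
    Continuous F ∧
    (∀ x ∈ JSet F, DifferentiableAt ℝ F x) ∧
    (∀ x ∈ JSet F, ∀ y ∈ JSet F,
      (1 / s) * F y ^ s ≤ (1 / s) * F x ^ s + F x ^ (s - 1) * deriv F x * (y - x) ∧
      (1 / s) * (1 - F y) ^ s ≤
        (1 / s) * (1 - F x) ^ s - (1 - F x) ^ (s - 1) * deriv F x * (y - x)) :=
  biSStarConcave_implies_tangent_bounds_general s hs0 F hbi
end

section
/- (Theorem 3, (ii) ⇒ (iii).) Let s* ≤ 1 with s* ≠ 0 and let F be a non-degenerate continuous distribution function that is differentiable at every point of J(F) with derivative f = F′, and suppose that for all x, y ∈ J(F): (1/s*) F(y)^{s*} ≤ (1/s*) F(x)^{s*} + F(x)^{s*−1} f(x)(y − x), and (1/s*)(1−F(y))^{s*} ≤ (1/s*)(1−F(x))^{s*} − (1−F(x))^{s*−1} f(x)(y − x). Then the s*-hazard function x ↦ f(x)/(1−F(x))^{1−s*} is nondecreasing on J(F), and the reverse s*-hazard function x ↦ f(x)/F(x)^{1−s*} is nonincreasing on J(F). -/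
open Set MeasureTheory Filter
open scoped NNReal ENNReal

/-- Adding the supporting-line inequalities at `x` and at `y` gives `0 ≤ (φ x - φ y) * (y - x)`. -/
theorem antitoneOn_of_le_add_mul_sub {S : Set ℝ} {g φ : ℝ → ℝ}
    (h : ∀ x ∈ S, ∀ y ∈ S, g y ≤ g x + φ x * (y - x)) : AntitoneOn φ S := by
  intro x hx y hy hxy
  rcases hxy.eq_or_lt with rfl | hlt
  · exact le_rfl
  have hat_x := h x hx y hy
  have hat_y := h y hy x hx
  have hsum : φ y * (y - x) ≤ φ x * (y - x) := by linarith
  exact le_of_mul_le_mul_right hsum (sub_pos.mpr hlt)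

theorem monotoneOn_of_le_sub_mul_sub {S : Set ℝ} {g φ : ℝ → ℝ}
    (h : ∀ x ∈ S, ∀ y ∈ S, g y ≤ g x - φ x * (y - x)) : MonotoneOn φ S := by
  have hneg : AntitoneOn (fun x => -φ x) S :=
    antitoneOn_of_le_add_mul_sub (g := g) fun x hx y hy => by linarith [h x hx y hy]
  exact fun x hx y hy hxy => neg_le_neg_iff.mp (hneg hx hy hxy)

theorem div_rpow_one_sub_eq_rpow_sub_one_mul {a : ℝ} (ha : 0 < a) (s b : ℝ) :
    b / a ^ (1 - s) = a ^ (s - 1) * b := by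
  rw [show s - 1 = -(1 - s) by ring, Real.rpow_neg ha.le, div_eq_inv_mul]

theorem hazard_monotone_of_tangent_bounds_general
    (s : ℝ) (F : ℝ → ℝ) (f : ℝ → ℝ)
    (hineq : ∀ x ∈ JSet F, ∀ y ∈ JSet F,
      (1 / s) * F y ^ s ≤ (1 / s) * F x ^ s + F x ^ (s - 1) * f x * (y - x) ∧
      (1 / s) * (1 - F y) ^ s ≤
        (1 / s) * (1 - F x) ^ s - (1 - F x) ^ (s - 1) * f x * (y - x)) :
    MonotoneOn (fun x => f x / (1 - F x) ^ (1 - s)) (JSet F) ∧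
    AntitoneOn (fun x => f x / F x ^ (1 - s)) (JSet F) := by
  have hhazard : MonotoneOn (fun x => (1 - F x) ^ (s - 1) * f x) (JSet F) :=
    monotoneOn_of_le_sub_mul_sub fun x hx y hy => (hineq x hx y hy).2
  have hreverse : AntitoneOn (fun x => F x ^ (s - 1) * f x) (JSet F) :=
    antitoneOn_of_le_add_mul_sub fun x hx y hy => (hineq x hx y hy).1
  refine ⟨hhazard.congr fun x hx => ?_, hreverse.congr fun x hx => ?_⟩
  · exact (div_rpow_one_sub_eq_rpow_sub_one_mul (sub_pos.mpr hx.2) s (f x)).symm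
  · exact (div_rpow_one_sub_eq_rpow_sub_one_mul hx.1 s (f x)).symm

/-- Theorem 3, (ii) ⇒ (iii): the tangent-line inequalities imply that the
`s*`-hazard function `f / (1 - F) ^ (1 - s*)` is nondecreasing on `J(F)` and the reverse
`s*`-hazard function `f / F ^ (1 - s*)` is nonincreasing on `J(F)`. -/
theorem hazard_monotone_of_tangent_bounds
    (s : ℝ) (hs : s ≤ 1) (hs0 : s ≠ 0)
    (F : ℝ → ℝ) (hF : IsDistFun F) (hnd : NonDeg F) (hcont : Continuous F)
    (f : ℝ → ℝ) (hderiv : ∀ x ∈ JSet F, HasDerivAt F (f x) x)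
    (hineq : ∀ x ∈ JSet F, ∀ y ∈ JSet F,
      (1 / s) * F y ^ s ≤ (1 / s) * F x ^ s + F x ^ (s - 1) * f x * (y - x) ∧
      (1 / s) * (1 - F y) ^ s ≤
        (1 / s) * (1 - F x) ^ s - (1 - F x) ^ (s - 1) * f x * (y - x)) :
    MonotoneOn (fun x => f x / (1 - F x) ^ (1 - s)) (JSet F) ∧
    AntitoneOn (fun x => f x / F x ^ (1 - s)) (JSet F) :=
  hazard_monotone_of_tangent_bounds_general s F f hineq
end

section
/- (Theorem 3, (iii) ⇒ (iv), regularity part.) Let s* ≤ 1 with s* ≠ 0 and let F be a non-degenerate continuous distribution function that is differentiable at every point of J(F) with derivative f = F′, such that x ↦ f(x)/(1−F(x))^{1−s*} is nondecreasing on J(F) and x ↦ f(x)/F(x)^{1−s*} is nonincreasing on J(F). Then f(x) > 0 for every x ∈ J(F), f is bounded on J(F), and f is Lipschitz continuous on every compact subinterval of J(F) (in particular f is differentiable at Lebesgue-almost every point of J(F)). -/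
/-!
Put `p = 1 - s ≥ 0`. On `J(F)` the density factors as `f = h · F ^ p = g · (1 - F) ^ p` with
`h` antitone and `g` monotone. If `f` vanished at a point, `h` would vanish to its right, so `F`
would be constant on an interval where it still has to climb to `1`. Comparing with `h` and `g`
at one fixed point of `J(F)` bounds `f`, because `F ^ p, (1 - F) ^ p ≤ 1`. On `[c, d] ⊆ J(F)`
the powers `F ^ p` and `(1 - F) ^ p` have bounded derivatives and `h`, `g` are bounded, so an
increment of `f` is at most `h · Δ(F ^ p)` and at least `g · Δ((1 - F) ^ p)`: `f` is Lipschitz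
there, and almost everywhere differentiability follows by Lebesgue's theorem for functions of
locally bounded variation.
-/

open Set MeasureTheory Filter
open scoped NNReal ENNReal

lemma sub_le_mul_abs_sub_of_div_le {a b u v A : ℝ} (hu : 0 < u) (hv : 0 < v)
    (h : b / v ≤ a / u) (hA : |a / u| ≤ A) : b - a ≤ A * |v - u| :=
  calc b - a ≤ a / u * v - a / u * u := by
        rw [div_mul_cancel₀ a hu.ne']
        exact sub_le_sub_right ((div_le_iff₀ hv).mp h) a
    _ = a / u * (v - u) := by ring
    _ ≤ |a / u| * |v - u| := by rw [← abs_mul]; exact le_abs_self _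
    _ ≤ A * |v - u| := by gcongr

theorem LipschitzOnWith.of_antitoneOn_div_of_monotoneOn_div {S : Set ℝ} {f u v : ℝ → ℝ}
    {Ku Kv : ℝ≥0} {A B : ℝ} (hu : LipschitzOnWith Ku u S) (hv : LipschitzOnWith Kv v S)
    (hu0 : ∀ x ∈ S, 0 < u x) (hv0 : ∀ x ∈ S, 0 < v x)
    (hfu : AntitoneOn (fun x => f x / u x) S) (hfv : MonotoneOn (fun x => f x / v x) S)
    (hA : ∀ x ∈ S, |f x / u x| ≤ A) (hB : ∀ x ∈ S, |f x / v x| ≤ B) :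
    LipschitzOnWith (A * Ku + B * Kv).toNNReal f S := by
  refine LipschitzOnWith.of_le_add_mul' _ fun x hx y hy => ?_
  have hA0 : 0 ≤ A := (abs_nonneg _).trans (hA x hx)
  have hB0 : 0 ≤ B := (abs_nonneg _).trans (hB x hx)
  have hdu : |u x - u y| ≤ Ku * dist x y := by
    rw [← Real.dist_eq]; exact hu.dist_le_mul x hx y hy
  have hdv : |v x - v y| ≤ Kv * dist x y := by
    rw [← Real.dist_eq]; exact hv.dist_le_mul x hx y hy
  have hKu : (0 : ℝ) ≤ Ku * dist x y := by positivity
  have hKv : (0 : ℝ) ≤ Kv * dist x y := by positivity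
  rcases le_total y x with hyx | hxy
  · have := sub_le_mul_abs_sub_of_div_le (hu0 y hy) (hu0 x hx) (hfu hy hx hyx) (hA y hy)
    linarith [mul_le_mul_of_nonneg_left hdu hA0, mul_nonneg hB0 hKv]
  · have := sub_le_mul_abs_sub_of_div_le (hv0 y hy) (hv0 x hx) (hfv hx hy hxy) (hB y hy)
    linarith [mul_le_mul_of_nonneg_left hdv hB0, mul_nonneg hA0 hKu]

theorem exists_lipschitzOnWith_rpow_Icc {G g : ℝ → ℝ} {a b M : ℝ} (p : ℝ)
    (hG : ∀ x ∈ Icc a b, HasDerivAt G (g x) x) (hG0 : ∀ x ∈ Icc a b, 0 < G x)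
    (hg : ∀ x ∈ Icc a b, ‖g x‖ ≤ M) :
    ∃ K : ℝ≥0, LipschitzOnWith K (fun x => G x ^ p) (Icc a b) := by
  have hcont : ContinuousOn (fun x => G x ^ (p - 1)) (Icc a b) := fun x hx =>
    ((hG x hx).continuousAt.rpow_const (Or.inl (hG0 x hx).ne')).continuousWithinAt
  obtain ⟨C, hC⟩ := isCompact_Icc.exists_bound_of_continuousOn hcont
  refine ⟨_, LipschitzOnWith.of_dist_le' (K := ‖p‖ * (C * M)) fun x hx y hy => ?_⟩
  rw [Real.dist_eq, Real.dist_eq, ← Real.norm_eq_abs, ← Real.norm_eq_abs]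
  refine (convex_Icc a b).norm_image_sub_le_of_norm_hasDerivWithin_le
    (fun z hz => ((hG z hz).rpow_const (Or.inl (hG0 z hz).ne')).hasDerivWithinAt)
    (fun z hz => ?_) hy hx
  calc ‖g z * p * G z ^ (p - 1)‖ = ‖p‖ * (‖G z ^ (p - 1)‖ * ‖g z‖) := by
        rw [norm_mul, norm_mul]; ring
    _ ≤ ‖p‖ * (C * M) := by
        gcongr
        exacts [(norm_nonneg _).trans (hC z hz), hC z hz, hg z hz]

theorem ae_differentiableAt_of_forall_Icc_lipschitzOnWith {f : ℝ → ℝ} {U : Set ℝ}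
    (hU : IsOpen U) (hU' : U.OrdConnected)
    (hf : ∀ a b, Icc a b ⊆ U → ∃ K : ℝ≥0, LipschitzOnWith K f (Icc a b)) :
    ∀ᵐ x ∂volume.restrict U, DifferentiableAt ℝ f x := by
  have hbv : LocallyBoundedVariationOn f U := fun a b ha hb => by
    rw [inter_eq_right.2 (hU'.out ha hb)]
    obtain ⟨K, hK⟩ := hf a b (hU'.out ha hb)
    rcases le_or_gt a b with hab | hab
    · simpa using hK.locallyBoundedVariationOn a b (left_mem_Icc.2 hab) (right_mem_Icc.2 hab)
    · exact BoundedVariationOn.of_subsingleton (subsingleton_Icc_of_ge hab.le)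
  filter_upwards [hbv.ae_differentiableWithinAt hU.measurableSet,
    ae_restrict_mem hU.measurableSet] with x hx hxU
  exact hx.differentiableAt (hU.mem_nhds hxU)

lemma eq_zero_of_antitoneOn_div {S : Set ℝ} {f u : ℝ → ℝ} {x y : ℝ}
    (h : AntitoneOn (fun x => f x / u x) S) (hx : x ∈ S) (hy : y ∈ S) (hxy : x ≤ y)
    (hfx : f x = 0) (hu : 0 < u y) (hfy : 0 ≤ f y) : f y = 0 := by
  have := h hx hy hxy
  simp only [hfx, zero_div] at this
  exact le_antisymm (by simpa using (div_le_iff₀ hu).mp this) hfy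

namespace JSet

variable {F f : ℝ → ℝ} {p : ℝ}

lemma ordConnected (hF : Monotone F) : (JSet F).OrdConnected :=
  ordConnected_Ioo.preimage_mono hF

lemma isOpen (hF : Continuous F) : IsOpen (JSet F) :=
  isOpen_Ioo.preimage hF

lemma exists_ge_lt (hF : Continuous F) (htop : Tendsto F atTop (nhds 1)) {x : ℝ}
    (hx : x ∈ JSet F) : ∃ y ∈ JSet F, x ≤ y ∧ F x < F y := by
  have hx1 : F x < (F x + 1) / 2 := by linarith [hx.2]
  have hm1 : (F x + 1) / 2 < 1 := by linarith [hx.2]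
  obtain ⟨z, hxz, hz⟩ := ((eventually_ge_atTop x).and (htop.eventually_const_lt hm1)).exists
  obtain ⟨y, hy, hFy⟩ := intermediate_value_Icc hxz hF.continuousOn ⟨hx1.le, hz.le⟩
  exact ⟨y, ⟨by linarith [hx.1], by linarith [hx.2]⟩, hy.1, hFy ▸ hx1⟩

theorem pos_of_antitoneOn_div_rpow (hmono : Monotone F) (hcont : Continuous F)
    (htop : Tendsto F atTop (nhds 1)) (hderiv : ∀ x ∈ JSet F, HasDerivAt F (f x) x)
    (hrev : AntitoneOn (fun x => f x / F x ^ p) (JSet F)) {x : ℝ} (hx : x ∈ JSet F) :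
    0 < f x := by
  refine ((hderiv x hx).nonneg_of_monotone hmono).lt_of_ne' fun hfx => ?_
  obtain ⟨y, hy, hxy, hFxy⟩ := exists_ge_lt hcont htop hx
  have hsub : Icc x y ⊆ JSet F := (ordConnected hmono).out hx hy
  have hconst : ∀ z ∈ Icc x y, F z = F x :=
    constant_of_has_deriv_right_zero hcont.continuousOn fun z hz => by
      have hzJ := hsub (Ico_subset_Icc_self hz)
      have hfz : f z = 0 := eq_zero_of_antitoneOn_div hrev hx hzJ hz.1 hfx
        (Real.rpow_pos_of_pos hzJ.1 p) ((hderiv z hzJ).nonneg_of_monotone hmono)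
      exact hfz ▸ (hderiv z hzJ).hasDerivWithinAt
  exact hFxy.ne' (hconst y (right_mem_Icc.2 hxy))

theorem le_div_rpow_add_div_one_sub_rpow (hp : 0 ≤ p)
    (hhaz : MonotoneOn (fun x => f x / (1 - F x) ^ p) (JSet F))
    (hrev : AntitoneOn (fun x => f x / F x ^ p) (JSet F)) {x₀ x : ℝ} (hx₀ : x₀ ∈ JSet F)
    (hfx₀ : 0 ≤ f x₀) (hx : x ∈ JSet F) :
    f x ≤ f x₀ / F x₀ ^ p + f x₀ / (1 - F x₀) ^ p := by
  have hA : 0 ≤ f x₀ / F x₀ ^ p := div_nonneg hfx₀ (Real.rpow_nonneg hx₀.1.le p)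
  have hB : 0 ≤ f x₀ / (1 - F x₀) ^ p :=
    div_nonneg hfx₀ (Real.rpow_nonneg (sub_pos.2 hx₀.2).le p)
  rcases le_total x₀ x with h | h
  · calc f x ≤ f x₀ / F x₀ ^ p * F x ^ p :=
          (div_le_iff₀ (Real.rpow_pos_of_pos hx.1 p)).mp (hrev hx₀ hx h)
      _ ≤ f x₀ / F x₀ ^ p * 1 := by
          gcongr; exact Real.rpow_le_one hx.1.le hx.2.le hp
      _ ≤ _ := by linarith
  · calc f x ≤ f x₀ / (1 - F x₀) ^ p * (1 - F x) ^ p :=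
          (div_le_iff₀ (Real.rpow_pos_of_pos (sub_pos.2 hx.2) p)).mp (hhaz hx hx₀ h)
      _ ≤ f x₀ / (1 - F x₀) ^ p * 1 := by
          gcongr; exact Real.rpow_le_one (sub_pos.2 hx.2).le (by linarith [hx.1]) hp
      _ ≤ _ := by linarith

theorem exists_lipschitzOnWith_Icc {M : ℝ} (hderiv : ∀ x ∈ JSet F, HasDerivAt F (f x) x)
    (hf0 : ∀ x ∈ JSet F, 0 ≤ f x) (hfM : ∀ x ∈ JSet F, f x ≤ M)
    (hhaz : MonotoneOn (fun x => f x / (1 - F x) ^ p) (JSet F))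
    (hrev : AntitoneOn (fun x => f x / F x ^ p) (JSet F)) {c d : ℝ} (hJ : Icc c d ⊆ JSet F) :
    ∃ K : ℝ≥0, LipschitzOnWith K f (Icc c d) := by
  rcases lt_or_ge d c with hdc | hcd
  · exact ⟨0, Icc_eq_empty hdc.not_ge ▸ lipschitzOnWith_empty 0 f⟩
  have hc := hJ (left_mem_Icc.2 hcd)
  have hd := hJ (right_mem_Icc.2 hcd)
  have hbound : ∀ x ∈ Icc c d, ‖f x‖ ≤ M := fun x hx => by
    rw [Real.norm_eq_abs, abs_of_nonneg (hf0 x (hJ hx))]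
    exact hfM x (hJ hx)
  obtain ⟨Ku, hu⟩ := exists_lipschitzOnWith_rpow_Icc p (fun x hx => hderiv x (hJ hx))
    (fun x hx => (hJ hx).1) hbound
  obtain ⟨Kv, hv⟩ := exists_lipschitzOnWith_rpow_Icc p
    (fun x hx => (hderiv x (hJ hx)).const_sub 1) (fun x hx => sub_pos.2 (hJ hx).2)
    (by simpa only [norm_neg] using hbound)
  refine ⟨_, hu.of_antitoneOn_div_of_monotoneOn_div hv
    (fun x hx => Real.rpow_pos_of_pos (hJ hx).1 p)
    (fun x hx => Real.rpow_pos_of_pos (sub_pos.2 (hJ hx).2) p) (hrev.mono hJ) (hhaz.mono hJ)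
    (A := f c / F c ^ p) (B := f d / (1 - F d) ^ p) (fun x hx => ?_) (fun x hx => ?_)⟩
  · rw [abs_of_nonneg (div_nonneg (hf0 x (hJ hx)) (Real.rpow_nonneg (hJ hx).1.le p))]
    exact hrev hc (hJ hx) hx.1
  · rw [abs_of_nonneg
      (div_nonneg (hf0 x (hJ hx)) (Real.rpow_nonneg (sub_pos.2 (hJ hx).2).le p))]
    exact hhaz (hJ hx) hd hx.2

end JSet

theorem density_regular_of_hazard_monotone_general
    (s : ℝ) (hs : s ≤ 1)
    (F : ℝ → ℝ) (hF : IsDistFun F) (hnd : NonDeg F) (hcont : Continuous F)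
    (f : ℝ → ℝ) (hderiv : ∀ x ∈ JSet F, HasDerivAt F (f x) x)
    (hhaz : MonotoneOn (fun x => f x / (1 - F x) ^ (1 - s)) (JSet F))
    (hrev : AntitoneOn (fun x => f x / F x ^ (1 - s)) (JSet F)) :
    (∀ x ∈ JSet F, 0 < f x) ∧
    (∃ M : ℝ, ∀ x ∈ JSet F, f x ≤ M) ∧
    (∀ c d : ℝ, Icc c d ⊆ JSet F → ∃ K : ℝ≥0, LipschitzOnWith K f (Icc c d)) ∧
    (∀ᵐ x ∂(volume.restrict (JSet F)), DifferentiableAt ℝ f x) := by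
  obtain ⟨hmono, -, -, -, htop⟩ := hF
  have hpos : ∀ x ∈ JSet F, 0 < f x := fun x hx =>
    JSet.pos_of_antitoneOn_div_rpow hmono hcont htop hderiv hrev hx
  obtain ⟨x₀, hx₀⟩ := hnd
  have hbdd : ∀ x ∈ JSet F, f x ≤ f x₀ / F x₀ ^ (1 - s) + f x₀ / (1 - F x₀) ^ (1 - s) :=
    fun x hx => JSet.le_div_rpow_add_div_one_sub_rpow (sub_nonneg.2 hs) hhaz hrev hx₀
      (hpos x₀ hx₀).le hx
  have hlip : ∀ c d : ℝ, Icc c d ⊆ JSet F → ∃ K : ℝ≥0, LipschitzOnWith K f (Icc c d) :=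
    fun c d => JSet.exists_lipschitzOnWith_Icc hderiv (fun x hx => (hpos x hx).le) hbdd hhaz hrev
  exact ⟨hpos, ⟨_, hbdd⟩, hlip, ae_differentiableAt_of_forall_Icc_lipschitzOnWith
    (JSet.isOpen hcont) (JSet.ordConnected hmono) hlip⟩

/-- Theorem 3, (iii) ⇒ (iv), regularity: monotonicity of the `s*`-hazard and
reverse `s*`-hazard functions implies that `f = F'` is strictly positive and bounded on `J(F)`,
Lipschitz on every compact subinterval of `J(F)`, and in particular differentiable at
Lebesgue-almost every point of `J(F)`. -/
theorem density_regular_of_hazard_monotone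
    (s : ℝ) (hs : s ≤ 1) (hs0 : s ≠ 0)
    (F : ℝ → ℝ) (hF : IsDistFun F) (hnd : NonDeg F) (hcont : Continuous F)
    (f : ℝ → ℝ) (hderiv : ∀ x ∈ JSet F, HasDerivAt F (f x) x)
    (hhaz : MonotoneOn (fun x => f x / (1 - F x) ^ (1 - s)) (JSet F))
    (hrev : AntitoneOn (fun x => f x / F x ^ (1 - s)) (JSet F)) :
    (∀ x ∈ JSet F, 0 < f x) ∧
    (∃ M : ℝ, ∀ x ∈ JSet F, f x ≤ M) ∧
    (∀ c d : ℝ, Icc c d ⊆ JSet F → ∃ K : ℝ≥0, LipschitzOnWith K f (Icc c d)) ∧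
    (∀ᵐ x ∂(volume.restrict (JSet F)), DifferentiableAt ℝ f x) :=
  density_regular_of_hazard_monotone_general s hs F hF hnd hcont f hderiv hhaz hrev
end

section
/- (Theorem 3, (iii) ⇒ (iv), derivative bounds.) Let s* ≤ 1 with s* ≠ 0 and let F be a non-degenerate continuous distribution function that is differentiable at every point of J(F) with derivative f = F′, such that x ↦ f(x)/(1−F(x))^{1−s*} is nondecreasing on J(F) and x ↦ f(x)/F(x)^{1−s*} is nonincreasing on J(F). Then for Lebesgue-almost every x ∈ J(F), f is differentiable at x with −(1−s*) f(x)²/(1−F(x)) ≤ f′(x) ≤ (1−s*) f(x)²/F(x). -/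
/-! The quotients `q = f / (1 - F) ^ (1 - s)` and `q = f / F ^ (1 - s)` are monotone on `J(F)`, an
open set since `F` is continuous at each of its points, so by Lebesgue's theorem both are
differentiable at almost every point of `J(F)`. There `f = q * u ^ (1 - s)` with `u = 1 - F`,
resp. `u = F`, is differentiable, and the product rule gives
`f' = q' * u ^ (1 - s) + (1 - s) * u' * f / u`, where `u' = ∓f`; the sign of `q'` gives the bounds. -/

open Set MeasureTheory Filter
open scoped NNReal ENNReal

open scoped Topology

theorem isOpen_preimage_of_continuousAt {X Y : Type*} [TopologicalSpace X] [TopologicalSpace Y]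
    {F : X → Y} {U : Set Y} (hU : IsOpen U) (hF : ∀ x ∈ F ⁻¹' U, ContinuousAt F x) :
    IsOpen (F ⁻¹' U) :=
  isOpen_iff_mem_nhds.2 fun x hx => (hF x hx).preimage_mem_nhds (hU.mem_nhds hx)

theorem AntitoneOn.ae_differentiableWithinAt {f : ℝ → ℝ} {s : Set ℝ} (hf : AntitoneOn f s)
    (hs : MeasurableSet s) : ∀ᵐ x ∂volume.restrict s, DifferentiableWithinAt ℝ f s x := by
  filter_upwards [hf.neg.ae_differentiableWithinAt hs] with x hx
  simpa using hx.neg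

theorem HasDerivAt.of_div_rpow {f u : ℝ → ℝ} {u' q' p x : ℝ}
    (hq : HasDerivAt (fun y => f y / u y ^ p) q' x) (hu_pos : ∀ᶠ y in 𝓝 x, 0 < u y)
    (hu : HasDerivAt u u' x) :
    HasDerivAt f (q' * u x ^ p + p * u' * f x / u x) x := by
  have hux : 0 < u x := hu_pos.self_of_nhds
  have hf : f =ᶠ[𝓝 x] fun y => f y / u y ^ p * u y ^ p := by
    filter_upwards [hu_pos] with y hy
    rw [div_mul_cancel₀ _ (Real.rpow_pos_of_pos hy p).ne']
  refine ((hq.mul (hu.rpow_const (Or.inl hux.ne'))).congr_of_eventuallyEq hf).congr_deriv ?_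
  rw [Real.rpow_sub_one hux.ne']
  field_simp

section QuotientByPower

variable {f u : ℝ → ℝ} {s : Set ℝ} {u' p x : ℝ}

theorem le_deriv_of_monotoneOn_div_rpow (hs : IsOpen s) (hx : x ∈ s)
    (hu_pos : ∀ y ∈ s, 0 < u y) (hu : HasDerivAt u u' x)
    (hmono : MonotoneOn (fun y => f y / u y ^ p) s)
    (hdiff : DifferentiableWithinAt ℝ (fun y => f y / u y ^ p) s x) :
    DifferentiableAt ℝ f x ∧ p * u' * f x / u x ≤ deriv f x := by
  have hsx : s ∈ 𝓝 x := hs.mem_nhds hx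
  have hq := (hdiff.differentiableAt hsx).hasDerivAt
  have hf := hq.of_div_rpow (eventually_of_mem hsx hu_pos) hu
  have hq_nonneg : 0 ≤ deriv (fun y => f y / u y ^ p) x :=
    (derivWithin_of_isOpen (f := fun y => f y / u y ^ p) hs hx) ▸ hmono.derivWithin_nonneg
  refine ⟨hf.differentiableAt, ?_⟩
  rw [hf.deriv]
  have := Real.rpow_pos_of_pos (hu_pos x hx) p
  nlinarith

theorem deriv_le_of_antitoneOn_div_rpow (hs : IsOpen s) (hx : x ∈ s)
    (hu_pos : ∀ y ∈ s, 0 < u y) (hu : HasDerivAt u u' x)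
    (hanti : AntitoneOn (fun y => f y / u y ^ p) s)
    (hdiff : DifferentiableWithinAt ℝ (fun y => f y / u y ^ p) s x) :
    DifferentiableAt ℝ f x ∧ deriv f x ≤ p * u' * f x / u x := by
  have hsx : s ∈ 𝓝 x := hs.mem_nhds hx
  have hq := (hdiff.differentiableAt hsx).hasDerivAt
  have hf := hq.of_div_rpow (eventually_of_mem hsx hu_pos) hu
  have hq_nonpos : deriv (fun y => f y / u y ^ p) x ≤ 0 :=
    (derivWithin_of_isOpen (f := fun y => f y / u y ^ p) hs hx) ▸ hanti.derivWithin_nonpos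
  refine ⟨hf.differentiableAt, ?_⟩
  rw [hf.deriv]
  have := Real.rpow_pos_of_pos (hu_pos x hx) p
  nlinarith

end QuotientByPower

theorem density_deriv_bounds_of_hazard_monotone_general
    (s : ℝ)
    (F : ℝ → ℝ)
    (f : ℝ → ℝ) (hderiv : ∀ x ∈ JSet F, HasDerivAt F (f x) x)
    (hhaz : MonotoneOn (fun x => f x / (1 - F x) ^ (1 - s)) (JSet F))
    (hrev : AntitoneOn (fun x => f x / F x ^ (1 - s)) (JSet F)) :
    ∀ᵐ x ∂(volume.restrict (JSet F)),
      DifferentiableAt ℝ f x ∧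
      -(1 - s) * f x ^ 2 / (1 - F x) ≤ deriv f x ∧
      deriv f x ≤ (1 - s) * f x ^ 2 / F x := by
  have hJ : IsOpen (JSet F) :=
    isOpen_preimage_of_continuousAt (U := Ioo 0 1) isOpen_Ioo fun x hx =>
      (hderiv x hx).continuousAt
  filter_upwards [hhaz.ae_differentiableWithinAt hJ.measurableSet,
    hrev.ae_differentiableWithinAt hJ.measurableSet, ae_restrict_mem hJ.measurableSet]
    with x hhazx hrevx hx
  obtain ⟨hdiff, hlower⟩ := le_deriv_of_monotoneOn_div_rpow hJ hx (fun y hy => sub_pos.2 hy.2)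
    ((hderiv x hx).const_sub 1) hhaz hhazx
  obtain ⟨-, hupper⟩ := deriv_le_of_antitoneOn_div_rpow hJ hx (fun y hy => hy.1)
    (hderiv x hx) hrev hrevx
  refine ⟨hdiff, ?_, ?_⟩
  · convert hlower using 1
    ring
  · convert hupper using 1
    ring

/-- Theorem 3, (iii) ⇒ (iv), derivative bounds: monotonicity of the `s*`-hazard
and reverse `s*`-hazard functions implies that for Lebesgue-almost every `x ∈ J(F)`, `f` is
differentiable at `x` with `-(1 - s*) f(x)² / (1 - F(x)) ≤ f'(x) ≤ (1 - s*) f(x)² / F(x)`. -/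
theorem density_deriv_bounds_of_hazard_monotone
    (s : ℝ) (hs : s ≤ 1) (hs0 : s ≠ 0)
    (F : ℝ → ℝ) (hF : IsDistFun F) (hnd : NonDeg F) (hcont : Continuous F)
    (f : ℝ → ℝ) (hderiv : ∀ x ∈ JSet F, HasDerivAt F (f x) x)
    (hhaz : MonotoneOn (fun x => f x / (1 - F x) ^ (1 - s)) (JSet F))
    (hrev : AntitoneOn (fun x => f x / F x ^ (1 - s)) (JSet F)) :
    ∀ᵐ x ∂(volume.restrict (JSet F)),
      DifferentiableAt ℝ f x ∧
      -(1 - s) * f x ^ 2 / (1 - F x) ≤ deriv f x ∧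
      deriv f x ≤ (1 - s) * f x ^ 2 / F x :=
  density_deriv_bounds_of_hazard_monotone_general s F f hderiv hhaz hrev
end

section
/- (Remark 1(ii).) Let 0 < s* ≤ 1 and let F be a non-degenerate bi-s*-concave distribution function. Then the support interval is bounded: inf J(F) > −∞ and sup J(F) < +∞. -/
open Set MeasureTheory Filter
open scoped NNReal ENNReal

/-!
On a half-line, a concave function that is bounded below grows towards the unbounded end:
a secant of the wrong sign would drive it to `-∞`. If `J(F)` were unbounded below, it would
contain a half-line `(-∞, x₀]` on which the positive concave function `F ^ s` is therefore
nonincreasing, so `F ≥ F x₀ > 0` there, contradicting `F → 0` at `-∞`. Symmetrically,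
`(1 - F) ^ s` excludes `J(F)` being unbounded above.
-/

section Slope

variable {𝕜 : Type*} [Field 𝕜] [LinearOrder 𝕜] [IsStrictOrderedRing 𝕜] {f : 𝕜 → 𝕜} {b : 𝕜}

theorem ConcaveOn.antitoneOn_Iic_of_bddBelow (hf : ConcaveOn 𝕜 (Iic b) f)
    (hbdd : BddBelow (f '' Iic b)) : AntitoneOn f (Iic b) := by
  intro x hx y hy hxy
  by_contra! hlt
  have hxy' : x < y := hxy.lt_of_ne (by rintro rfl; exact hlt.false)
  obtain ⟨L, hL⟩ := hbdd
  have hLx : L ≤ f x := hL (mem_image_of_mem f hx)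
  set m := (f y - f x) / (y - x)
  have hm : 0 < m := div_pos (sub_pos.2 hlt) (sub_pos.2 hxy')
  set c := x - (f x - L + 1) / m
  have hcx : c < x := sub_lt_self _ (div_pos (by linarith) hm)
  have hc : c ∈ Iic b := (hcx.trans_le hx).le
  have hslope : m ≤ (f x - f c) / (x - c) := hf.slope_anti_adjacent hc hy hcx hxy'
  have hxc : x - c = (f x - L + 1) / m := sub_sub_cancel _ _
  rw [le_div_iff₀ (sub_pos.2 hcx), hxc, mul_div_cancel₀ _ hm.ne'] at hslope
  have := hL (mem_image_of_mem f hc)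
  linarith

theorem ConcaveOn.monotoneOn_Ici_of_bddBelow (hf : ConcaveOn 𝕜 (Ici b) f)
    (hbdd : BddBelow (f '' Ici b)) : MonotoneOn f (Ici b) := by
  have hneg : ConcaveOn 𝕜 (Iic (-b)) (f ∘ Neg.neg) := by
    convert hf.comp_affineMap (-AffineMap.id 𝕜 𝕜) using 1 <;> ext <;> simp [le_neg]
  have hbdd' : BddBelow ((f ∘ Neg.neg) '' Iic (-b)) := by
    rwa [image_comp, image_neg_Iic, neg_neg]
  intro x hx y hy hxy
  simpa using hneg.antitoneOn_Iic_of_bddBelow hbdd' (neg_le_neg hy) (neg_le_neg hx)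
    (neg_le_neg hxy)

end Slope

theorem ordConnected_jSet {F : ℝ → ℝ} (hF : Monotone F) : (JSet F).OrdConnected :=
  ordConnected_Ioo.preimage_mono hF

theorem bddBelow_jSet_of_concaveOn_rpow {F : ℝ → ℝ} {s : ℝ} (hs : 0 < s) (hF : Monotone F)
    (hF0 : Tendsto F atBot (nhds 0)) (hconc : ConcaveOn ℝ (JSet F) fun x => F x ^ s) :
    BddBelow (JSet F) := by
  by_contra hJ
  rw [not_bddBelow_iff] at hJ
  obtain ⟨x₀, hx₀, -⟩ := hJ 0
  have hsub : Iic x₀ ⊆ JSet F := fun t ht => by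
    obtain ⟨y, hy, hyt⟩ := hJ t
    exact (ordConnected_jSet hF).out hy hx₀ ⟨hyt.le, ht⟩
  have hanti : AntitoneOn (fun x => F x ^ s) (Iic x₀) :=
    (hconc.subset hsub (convex_Iic x₀)).antitoneOn_Iic_of_bddBelow
      ⟨0, by rintro _ ⟨t, ht, rfl⟩; exact (Real.rpow_pos_of_pos (hsub ht).1 s).le⟩
  have hlow : ∀ t ≤ x₀, F x₀ ≤ F t := fun t ht =>
    (Real.rpow_le_rpow_iff hx₀.1.le (hsub ht).1.le hs).1 (hanti ht self_mem_Iic ht)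
  obtain ⟨t, ht, hFt⟩ :=
    ((eventually_le_atBot x₀).and (hF0.eventually (gt_mem_nhds hx₀.1))).exists
  exact (hFt.trans_le (hlow t ht)).false

theorem bddAbove_jSet_of_concaveOn_one_sub_rpow {F : ℝ → ℝ} {s : ℝ} (hs : 0 < s)
    (hF : Monotone F) (hF1 : Tendsto F atTop (nhds 1))
    (hconc : ConcaveOn ℝ (JSet F) fun x => (1 - F x) ^ s) : BddAbove (JSet F) := by
  by_contra hJ
  rw [not_bddAbove_iff] at hJ
  obtain ⟨x₀, hx₀, -⟩ := hJ 0
  have hsub : Ici x₀ ⊆ JSet F := fun t ht => by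
    obtain ⟨y, hy, hyt⟩ := hJ t
    exact (ordConnected_jSet hF).out hx₀ hy ⟨ht, hyt.le⟩
  have hmono : MonotoneOn (fun x => (1 - F x) ^ s) (Ici x₀) :=
    (hconc.subset hsub (convex_Ici x₀)).monotoneOn_Ici_of_bddBelow
      ⟨0, by rintro _ ⟨t, ht, rfl⟩; exact (Real.rpow_pos_of_pos (sub_pos.2 (hsub ht).2) s).le⟩
  have hup : ∀ t ≥ x₀, F t ≤ F x₀ := fun t ht => by
    have := (Real.rpow_le_rpow_iff (sub_pos.2 hx₀.2).le (sub_pos.2 (hsub ht).2).le hs).1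
      (hmono self_mem_Ici ht ht)
    linarith
  obtain ⟨t, ht, hFt⟩ :=
    ((eventually_ge_atTop x₀).and (hF1.eventually (lt_mem_nhds hx₀.2))).exists
  exact (hFt.trans_le (hup t ht)).false

theorem support_bounded_of_biSStarConcave_pos_general
    (s : ℝ) (hs0 : 0 < s)
    (F : ℝ → ℝ) (hF : IsDistFun F)
    (hbi : IsBiSStarConcave s F) :
    BddBelow (JSet F) ∧ BddAbove (JSet F) := by
  obtain ⟨hmono, -, -, hbot, htop⟩ := hF
  obtain ⟨hconcF, hconcG⟩ := hbi.2.2.2 hs0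
  exact ⟨bddBelow_jSet_of_concaveOn_rpow hs0 hmono hbot hconcF,
    bddAbove_jSet_of_concaveOn_one_sub_rpow hs0 hmono htop hconcG⟩

/-- Remark 1(ii): for `0 < s* ≤ 1`, a non-degenerate bi-`s*`-concave distribution
function has bounded support interval: `inf J(F) > -∞` and `sup J(F) < +∞`. -/
theorem support_bounded_of_biSStarConcave_pos
    (s : ℝ) (hs0 : 0 < s) (hs1 : s ≤ 1)
    (F : ℝ → ℝ) (hF : IsDistFun F) (hnd : NonDeg F)
    (hbi : IsBiSStarConcave s F) :
    BddBelow (JSet F) ∧ BddAbove (JSet F) :=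
  support_bounded_of_biSStarConcave_pos_general s hs0 F hF hbi
end

section
/- (Remark 1(iii), moment bound.) Let s* < 0 and let F be a non-degenerate bi-s*-concave distribution function, and let μ_F be the Lebesgue–Stieltjes probability measure on ℝ determined by μ_F((−∞, x]) = F(x). Then for every t with 0 < t < −1/s*, the moment ∫_ℝ |x|^t dμ_F(x) is finite. -/
open Set MeasureTheory Filter
open scoped NNReal ENNReal

/-!
Convexity of `F ^ s` with `s < 0` on `J(F)` forces `F ^ s` to grow at least linearly towards the
left end of `J(F)`, so `F (-l) = O(l ^ (1 / s))`; likewise `1 - F l = O(l ^ (1 / s))` as `l → ∞`.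
Hence `μ {|x| > l} = O(l ^ (1 / s))`, and the layer-cake formula
`∫ |x| ^ t dμ = t ∫₀^∞ l ^ (t - 1) μ {|x| > l} dl` is finite as soon as `t + 1 / s < 0`.
-/

theorem ConvexOn.secant_le_of_lt_of_lt {S : Set ℝ} {g : ℝ → ℝ} (hg : ConvexOn ℝ S g)
    {a b x : ℝ} (ha : a ∈ S) (hx : x ∈ S) (hab : a < b) (hbx : b < x) :
    g b + (g b - g a) / (b - a) * (x - b) ≤ g x := by
  have hslope := hg.slope_mono_adjacent ha hx hab hbx
  rw [div_le_div_iff₀ (sub_pos.2 hab) (sub_pos.2 hbx)] at hslope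
  rw [div_mul_eq_mul_div, ← le_sub_iff_add_le', div_le_iff₀ (sub_pos.2 hab)]
  linarith

theorem Real.le_rpow_inv_of_neg {x y s : ℝ} (hx : 0 ≤ x) (hy : 0 < y) (hs : s < 0)
    (h : 0 < x → y ≤ x ^ s) : x ≤ y ^ s⁻¹ := by
  rcases hx.eq_or_lt with rfl | hx
  · positivity
  · exact (Real.le_rpow_inv_iff_of_neg hx hy hs).2 (h hx)

theorem exists_le_mul_rpow_of_le_rpow_sub {q : ℝ → ℝ} {r B a : ℝ} (hr : r ≤ 0) (hB : 0 < B)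
    (hq : ∀ l, a < l → q l ≤ (B * (l - a)) ^ r) : ∃ C M, ∀ l ≥ M, q l ≤ C * l ^ r := by
  refine ⟨(B / 2) ^ r, 2 * |a| + 1, fun l hl => ?_⟩
  have hl : 0 < l := by linarith [abs_nonneg a]
  have hla : l / 2 ≤ l - a := by linarith [le_abs_self a]
  calc q l ≤ (B * (l - a)) ^ r := hq l (by linarith [le_abs_self a])
    _ ≤ (B / 2 * l) ^ r := Real.rpow_le_rpow_of_nonpos (by positivity) (by nlinarith) hr
    _ = (B / 2) ^ r * l ^ r := Real.mul_rpow (by positivity) hl.le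

section TailBounds

variable {p : ℝ → ℝ} {S : Set ℝ} {s a b : ℝ}

theorem exists_le_mul_rpow_atTop_of_convexOn_rpow (hs : s < 0) (hp : ∀ x, 0 ≤ p x)
    (hconv : ConvexOn ℝ S fun x => p x ^ s) (ha : a ∈ S) (hab : a < b) (hpb : 0 < p b)
    (hlt : p b < p a) (hS : ∀ x, b < x → 0 < p x → x ∈ S) :
    ∃ C M, ∀ l ≥ M, p l ≤ C * l ^ s⁻¹ := by
  have hB : 0 < (p b ^ s - p a ^ s) / (b - a) :=
    div_pos (sub_pos.2 (Real.rpow_lt_rpow_of_neg hpb hlt hs)) (sub_pos.2 hab)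
  refine exists_le_mul_rpow_of_le_rpow_sub (a := b) (inv_neg''.2 hs).le hB fun x hbx =>
    Real.le_rpow_inv_of_neg (hp x) (mul_pos hB (sub_pos.2 hbx)) hs fun hpx => ?_
  have hsecant := hconv.secant_le_of_lt_of_lt ha (hS x hbx hpx) hab hbx
  linarith [Real.rpow_pos_of_pos hpb s]

theorem exists_le_mul_rpow_atBot_of_convexOn_rpow (hs : s < 0) (hp : ∀ x, 0 ≤ p x)
    (hconv : ConvexOn ℝ S fun x => p x ^ s) (hb : b ∈ S) (hab : a < b) (hpa : 0 < p a)
    (hlt : p a < p b) (hS : ∀ x, x < a → 0 < p x → x ∈ S) :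
    ∃ C M, ∀ l ≥ M, p (-l) ≤ C * l ^ s⁻¹ := by
  have hconv' : ConvexOn ℝ (-S) fun x => p (-x) ^ s := hconv.comp_linearMap (-LinearMap.id)
  exact exists_le_mul_rpow_atTop_of_convexOn_rpow hs (fun x => hp (-x)) hconv'
    (neg_mem_neg.2 hb) (neg_lt_neg hab) (by rwa [neg_neg])
    (by rwa [neg_neg, neg_neg]) fun x hx hpx => hS _ (by linarith) hpx

end TailBounds

theorem Ioo_zero_one_subset_range {F : ℝ → ℝ} (hcont : Continuous F)
    (hbot : Tendsto F atBot (nhds 0)) (htop : Tendsto F atTop (nhds 1)) :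
    Ioo 0 1 ⊆ range F := fun _ hy =>
  mem_range_of_exists_le_of_exists_ge hcont (hbot.eventually (ge_mem_nhds hy.1)).exists
    (htop.eventually (le_mem_nhds hy.2)).exists

section CDF

variable {F : ℝ → ℝ} {μ : Measure ℝ}

theorem isProbabilityMeasure_of_measure_Iic (hμ : ∀ x, μ (Iic x) = ENNReal.ofReal (F x))
    (htop : Tendsto F atTop (nhds 1)) : IsProbabilityMeasure μ := by
  refine ⟨tendsto_nhds_unique (tendsto_measure_Iic_atTop μ) ?_⟩
  simpa [hμ] using ENNReal.tendsto_ofReal htop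

theorem measure_lt_abs_le [IsProbabilityMeasure μ] (hμ : ∀ x, μ (Iic x) = ENNReal.ofReal (F x))
    (h01 : ∀ x, 0 ≤ F x ∧ F x ≤ 1) (l : ℝ) :
    μ {x | l < |x|} ≤ ENNReal.ofReal (F (-l) + (1 - F l)) := by
  have hsub : {x : ℝ | l < |x|} ⊆ Iic (-l) ∪ Ioi l := fun x (hx : l < |x|) => by
    rcases lt_abs.1 hx with h | h
    · exact Or.inr h
    · exact Or.inl (show x ≤ -l by linarith)
  calc μ {x | l < |x|} ≤ μ (Iic (-l)) + μ (Ioi l) :=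
        (measure_mono hsub).trans (measure_union_le _ _)
    _ = ENNReal.ofReal (F (-l) + (1 - F l)) := by
      rw [← compl_Iic, prob_compl_eq_one_sub measurableSet_Iic, hμ, hμ,
        ENNReal.ofReal_add (h01 _).1 (sub_nonneg.2 (h01 l).2), ENNReal.ofReal_sub _ (h01 l).1,
        ENNReal.ofReal_one]

end CDF

theorem lintegral_rpow_lt_top_of_meas_lt_le {α : Type*} [MeasurableSpace α] {μ : Measure α}
    [IsFiniteMeasure μ] {f : α → ℝ} (hf0 : 0 ≤ᵐ[μ] f) (hf : AEMeasurable f μ) {t r C M : ℝ}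
    (ht : 0 < t) (htr : t + r < 0)
    (htail : ∀ l ≥ M, μ {a | l < f a} ≤ ENNReal.ofReal (C * l ^ r)) :
    ∫⁻ a, ENNReal.ofReal (f a ^ t) ∂μ < ⊤ := by
  set M' := max M 1
  have hM' : 0 < M' := lt_max_of_lt_right one_pos
  rw [lintegral_rpow_eq_lintegral_meas_lt_mul μ hf0 hf ht, ← Ioc_union_Ioi_eq_Ioi hM'.le,
    lintegral_union measurableSet_Ioi (Ioc_disjoint_Ioi le_rfl)]
  refine ENNReal.mul_lt_top ENNReal.ofReal_lt_top (ENNReal.add_lt_top.2 ⟨?_, ?_⟩)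
  · have hint : IntegrableOn (fun l : ℝ => l ^ (t - 1)) (Ioc 0 M') :=
      ((intervalIntegral.integrableOn_Ioo_rpow_iff hM').2 (by linarith)).congr_set_ae
        Ioo_ae_eq_Ioc.symm
    calc _ ≤ ∫⁻ l in Ioc 0 M', μ univ * ENNReal.ofReal (l ^ (t - 1)) :=
          lintegral_mono fun _ => mul_le_mul_left (measure_mono (subset_univ _)) _
      _ < ⊤ := by
        rw [lintegral_const_mul' _ _ (measure_ne_top _ _)]
        exact ENNReal.mul_lt_top (measure_lt_top μ univ) hint.lintegral_lt_top
  · have hint : IntegrableOn (fun l : ℝ => C * l ^ (r + (t - 1))) (Ioi M') :=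
      ((integrableOn_Ioi_rpow_iff hM').2 (by linarith)).const_mul C
    calc _ ≤ ∫⁻ l in Ioi M', ENNReal.ofReal (C * l ^ (r + (t - 1))) := by
          refine setLIntegral_mono' measurableSet_Ioi fun l hl => ?_
          have hl0 : 0 < l := hM'.trans hl
          calc μ {a | l < f a} * ENNReal.ofReal (l ^ (t - 1))
              ≤ ENNReal.ofReal (C * l ^ r) * ENNReal.ofReal (l ^ (t - 1)) := by
                gcongr; exact htail l ((le_max_left _ _).trans hl.le)
            _ = ENNReal.ofReal (C * l ^ (r + (t - 1))) := by
                rw [← ENNReal.ofReal_mul' (by positivity), Real.rpow_add hl0, mul_assoc]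
      _ < ⊤ := hint.lintegral_lt_top

/-- Remark 1(iii), moment bound: for `s* < 0` and a non-degenerate
bi-`s*`-concave distribution function `F` with Lebesgue–Stieltjes measure `μ`, every absolute
moment of order `t ∈ (0, -1/s*)` is finite. -/
theorem moments_finite_of_biSStarConcave
    (s : ℝ) (hs : s < 0)
    (F : ℝ → ℝ) (hF : IsDistFun F) (hnd : NonDeg F)
    (hbi : IsBiSStarConcave s F)
    (μ : Measure ℝ) (hμ : ∀ x, μ (Iic x) = ENNReal.ofReal (F x))
    (t : ℝ) (ht0 : 0 < t) (ht1 : t < -1 / s) :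
    ∫⁻ x, ENNReal.ofReal (|x| ^ t) ∂μ < ⊤ := by
  obtain ⟨hmono, h01, -, hbot, htop⟩ := hF
  obtain ⟨hcont, hconv, -, -⟩ := hbi
  obtain ⟨hconvF, hconv1F⟩ := hconv hs
  obtain ⟨c, hc⟩ := hnd
  have hrange := Ioo_zero_one_subset_range hcont hbot htop
  obtain ⟨a, ha⟩ := hrange (show F c / 2 ∈ Ioo 0 1 from ⟨by linarith, by linarith⟩)
  obtain ⟨b, hb⟩ := hrange (show (1 + F c) / 2 ∈ Ioo 0 1 from ⟨by linarith, by linarith⟩)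
  have hac : F a < F c := by linarith
  have hcb : F c < F b := by linarith
  have haJ : a ∈ JSet F := ⟨by linarith, by linarith⟩
  have hbJ : b ∈ JSet F := ⟨by linarith, by linarith⟩
  obtain ⟨CL, ML, hleft⟩ := exists_le_mul_rpow_atBot_of_convexOn_rpow hs (fun x => (h01 x).1)
    hconvF hc (hmono.reflect_lt hac) haJ.1 hac
    fun x hx hpx => ⟨hpx, (hmono hx.le).trans_lt haJ.2⟩
  obtain ⟨CR, MR, hright⟩ := exists_le_mul_rpow_atTop_of_convexOn_rpow (p := fun x => 1 - F x) hs
    (fun x => sub_nonneg.2 (h01 x).2) hconv1F hc (hmono.reflect_lt hcb) (by linarith)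
    (by linarith) fun x hx hpx => ⟨hbJ.1.trans_le (hmono hx.le), by linarith⟩
  have := isProbabilityMeasure_of_measure_Iic hμ htop
  have htr : t + s⁻¹ < 0 := by rw [neg_div, one_div] at ht1; linarith
  refine lintegral_rpow_lt_top_of_meas_lt_le (C := CL + CR) (M := max ML MR)
    (ae_of_all _ fun x => abs_nonneg x) measurable_abs.aemeasurable ht0 htr
    fun l hl => (measure_lt_abs_le hμ h01 l).trans (ENNReal.ofReal_le_ofReal ?_)
  linarith [hleft l (le_of_max_le_left hl), hright l (le_of_max_le_right hl)]
end

section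
/- (Corollary 5, bounds for F ∈ P_{s*} with s* ≠ 0.) Let s* ≤ 1 with s* ≠ 0 and let F be a non-degenerate bi-s*-concave distribution function. Define F_L(x) = (F(x)^{s*} − (1 − s*))/s* and F_U(x) = (1 − (1 − F(x))^{s*})/s*. Then F_L(x) ≤ F(x) ≤ F_U(x) for all x ∈ J(F); moreover F_U is a convex function on J(F) and F_L is a concave function on J(F). -/
open Set MeasureTheory Filter
open scoped NNReal ENNReal

/-! Both bounds are the Bernoulli inequality `(u ^ s - 1) / s ≤ u - 1` (for `u > 0`, `s ≤ 1`,
`s ≠ 0`), applied to `u = F x` and to `u = 1 - F x`. For the convexity statements, the sign of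
`s` matches the kind of convexity of the powers: dividing by `s` makes `F ^ s` concave, and
`-(1 - F) ^ s` convex, in both cases `s < 0` and `s > 0`. -/

open Real in
theorem one_add_mul_sub_one_le_rpow_of_neg {u p : ℝ} (hu : 0 < u) (hp : p < 0) :
    1 + p * (u - 1) ≤ u ^ p :=
  calc 1 + p * (u - 1) ≤ 1 + p * log u := by
        gcongr 1 + ?_
        exact mul_le_mul_of_nonpos_left (log_le_sub_one_of_pos hu) hp.le
    _ ≤ exp (p * log u) := by linarith [add_one_le_exp (p * log u)]
    _ = u ^ p := by rw [rpow_def_of_pos hu, mul_comm]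

theorem rpow_sub_one_div_le_sub_one {u s : ℝ} (hu : 0 < u) (hs : s ≤ 1) (hs0 : s ≠ 0) :
    (u ^ s - 1) / s ≤ u - 1 := by
  rcases hs0.lt_or_gt with hneg | hpos
  · rw [div_le_iff_of_neg hneg]
    linarith [one_add_mul_sub_one_le_rpow_of_neg hu hneg]
  · rw [div_le_iff₀ hpos]
    have := rpow_one_add_le_one_add_mul_self (by linarith : -1 ≤ u - 1) hpos.le hs
    rw [add_sub_cancel] at this
    linarith

section SignedDivision

variable {E : Type*} [AddCommGroup E] [Module ℝ E] {D : Set E} {g : E → ℝ} {s : ℝ}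

theorem convexOn_const_sub_div (hs0 : s ≠ 0) (c : ℝ) (hneg : s < 0 → ConvexOn ℝ D g)
    (hpos : 0 < s → ConcaveOn ℝ D g) : ConvexOn ℝ D fun x => (c - g x) / s := by
  rcases hs0.lt_or_gt with hs | hs
  · refine (((hneg hs).sub (concaveOn_const c (hneg hs).1)).smul
      (inv_nonneg.2 (neg_nonneg.2 hs.le))).congr fun x _ => ?_
    simp only [Pi.sub_apply, smul_eq_mul]
    field_simp
    ring
  · refine (((convexOn_const c (hpos hs).1).sub (hpos hs)).smul
      (inv_nonneg.2 hs.le)).congr fun x _ => ?_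
    simp only [Pi.sub_apply, smul_eq_mul]
    field_simp

theorem concaveOn_sub_const_div (hs0 : s ≠ 0) (c : ℝ) (hneg : s < 0 → ConvexOn ℝ D g)
    (hpos : 0 < s → ConcaveOn ℝ D g) : ConcaveOn ℝ D fun x => (g x - c) / s :=
  (convexOn_const_sub_div hs0 c hneg hpos).neg.congr fun x _ => by
    simp only [Pi.neg_apply, ← neg_div, neg_sub]

end SignedDivision

theorem bounds_for_biSStarConcave_general
    (s : ℝ) (hs : s ≤ 1) (hs0 : s ≠ 0)
    (F : ℝ → ℝ)
    (hbi : IsBiSStarConcave s F) :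
    (∀ x ∈ JSet F,
      (F x ^ s - (1 - s)) / s ≤ F x ∧ F x ≤ (1 - (1 - F x) ^ s) / s) ∧
    ConvexOn ℝ (JSet F) (fun x => (1 - (1 - F x) ^ s) / s) ∧
    ConcaveOn ℝ (JSet F) (fun x => (F x ^ s - (1 - s)) / s) := by
  obtain ⟨-, hneg, -, hpos⟩ := hbi
  refine ⟨fun x hx => ⟨?_, ?_⟩,
    convexOn_const_sub_div hs0 1 (fun h => (hneg h).2) (fun h => (hpos h).2),
    concaveOn_sub_const_div hs0 (1 - s) (fun h => (hneg h).1) (fun h => (hpos h).1)⟩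
  · have h := rpow_sub_one_div_le_sub_one hx.1 hs hs0
    rw [show (F x ^ s - (1 - s)) / s = (F x ^ s - 1) / s + 1 by field_simp; ring]
    linarith
  · have h := rpow_sub_one_div_le_sub_one (sub_pos.2 hx.2) hs hs0
    rw [show (1 - (1 - F x) ^ s) / s = -(((1 - F x) ^ s - 1) / s) by ring]
    linarith

/-- Corollary 5: for `s* ≤ 1`, `s* ≠ 0`, and a non-degenerate bi-`s*`-concave
distribution function `F`, with `F_L = (F^{s*} - (1 - s*))/s*` and
`F_U = (1 - (1 - F)^{s*})/s*`, one has `F_L ≤ F ≤ F_U` on `J(F)`; moreover `F_U` is convex on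
`J(F)` and `F_L` is concave on `J(F)`. -/
theorem bounds_for_biSStarConcave
    (s : ℝ) (hs : s ≤ 1) (hs0 : s ≠ 0)
    (F : ℝ → ℝ) (hF : IsDistFun F) (hnd : NonDeg F)
    (hbi : IsBiSStarConcave s F) :
    (∀ x ∈ JSet F,
      (F x ^ s - (1 - s)) / s ≤ F x ∧ F x ≤ (1 - (1 - F x) ^ s) / s) ∧
    ConvexOn ℝ (JSet F) (fun x => (1 - (1 - F x) ^ s) / s) ∧
    ConcaveOn ℝ (JSet F) (fun x => (F x ^ s - (1 - s)) / s) :=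
  bounds_for_biSStarConcave_general s hs hs0 F hbi
end

section
/- (Lemma 6(i), core.) Let s* ≤ 1 with s* ≠ 0, let a < b be real numbers and 0 < u < v < 1, and set γ₁ = (v^{s*} − u^{s*})/(s*(b − a)) and γ₂ = ((1−u)^{s*} − (1−v)^{s*})/(s*(b − a)). If G is a non-degenerate bi-s*-concave distribution function with G(a) ≥ u and G(b) ≤ v, then G is Lipschitz continuous on ℝ with Lipschitz constant max{γ₁, γ₂}; equivalently, its derivative g = G′ satisfies g(x) ≤ max{γ₁, γ₂} for every x ∈ J(G). -/
open Set MeasureTheory Filter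
open scoped NNReal ENNReal

/-! With `φ t = (t ^ s - 1) / s` (the Box–Cox transform, increasing and concave on `(0, ∞)`
when `s ≤ 1`), bi-`s`-concavity says that `Φ = φ ∘ G` and `Ψ = φ ∘ (1 - G)` are concave on
`J(G)`. Since `φ' ≥ 1` on `(0, 1]`, increments of `G` are dominated by those of `Φ` and of `-Ψ`.
Right of `b`, the chord slopes of `Φ` are at most its slope over `[a, b]`, hence at most `γ₁`;
left of `a`, `Ψ` gives `γ₂` in the same way. At `x ∈ [a, b)`, the chord of `Φ` from `a` and
the chord of `Ψ` to `b`, combined with the tangent bound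
`t₂ - t₁ ≤ t₂ ^ (1 - s) (φ t₂ - φ t₁)`, bound the right upper Dini derivative of `G` by
`ρ (G x) / (b - a)`, where
`ρ w = w ^ (1 - s) (φ w - φ u) + (1 - w) ^ (1 - s) (φ (1 - w) - φ (1 - v))` is convex, so
`ρ ≤ max (ρ u) (ρ v) ≤ (b - a) max γ₁ γ₂`. A bound on right Dini derivatives integrates to
the Lipschitz bound. -/

open Topology

noncomputable def boxCox (s t : ℝ) : ℝ := (t ^ s - 1) / s

section boxCox

variable {s t t₁ t₂ : ℝ}

lemma boxCox_sub_boxCox (s t₁ t₂ : ℝ) : boxCox s t₂ - boxCox s t₁ = (t₂ ^ s - t₁ ^ s) / s := by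
  unfold boxCox; ring

lemma hasDerivAt_boxCox (hs0 : s ≠ 0) (ht : 0 < t) : HasDerivAt (boxCox s) (t ^ (s - 1)) t := by
  have h := ((Real.hasDerivAt_rpow_const (p := s) (Or.inl ht.ne')).sub_const 1).div_const s
  rwa [mul_div_cancel_left₀ _ hs0] at h

lemma strictMonoOn_boxCox (hs0 : s ≠ 0) : StrictMonoOn (boxCox s) (Ioi 0) := by
  refine strictMonoOn_of_deriv_pos (convex_Ioi 0)
    (fun t ht => (hasDerivAt_boxCox hs0 ht).continuousAt.continuousWithinAt) fun t ht => ?_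
  rw [interior_Ioi] at ht
  rw [(hasDerivAt_boxCox hs0 ht).deriv]
  exact Real.rpow_pos_of_pos ht _

lemma concaveOn_boxCox (hs : s ≤ 1) (hs0 : s ≠ 0) : ConcaveOn ℝ (Ioi 0) (boxCox s) := by
  refine AntitoneOn.concaveOn_of_deriv (convex_Ioi 0)
    (fun t ht => (hasDerivAt_boxCox hs0 ht).continuousAt.continuousWithinAt)
    (fun t ht =>
      (hasDerivAt_boxCox hs0 (by simpa using ht)).differentiableAt.differentiableWithinAt)
    fun t ht t' ht' htt' => ?_
  rw [interior_Ioi] at ht ht'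
  rw [(hasDerivAt_boxCox hs0 ht).deriv, (hasDerivAt_boxCox hs0 ht').deriv]
  exact Real.rpow_le_rpow_of_nonpos ht htt' (by linarith)

lemma sub_le_rpow_mul_boxCox_sub (hs : s ≤ 1) (hs0 : s ≠ 0) (h₁ : 0 < t₁) (h₁₂ : t₁ ≤ t₂) :
    t₂ - t₁ ≤ t₂ ^ (1 - s) * (boxCox s t₂ - boxCox s t₁) := by
  rcases h₁₂.eq_or_lt with rfl | h₁₂
  · simp
  have h₂ : 0 < t₂ := h₁.trans h₁₂
  have hslope :=
    (concaveOn_boxCox hs hs0).le_slope_of_hasDerivAt h₁ h₂ h₁₂ (hasDerivAt_boxCox hs0 h₂)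
  rw [slope_def_field, le_div_iff₀ (sub_pos.2 h₁₂)] at hslope
  calc t₂ - t₁ = t₂ ^ (1 - s) * (t₂ ^ (s - 1) * (t₂ - t₁)) := by
        rw [← mul_assoc, ← Real.rpow_add h₂]; norm_num
    _ ≤ t₂ ^ (1 - s) * (boxCox s t₂ - boxCox s t₁) := by gcongr

lemma sub_le_boxCox_sub (hs : s ≤ 1) (hs0 : s ≠ 0) (h₁ : 0 < t₁) (h₁₂ : t₁ ≤ t₂) (h₂ : t₂ ≤ 1) :
    t₂ - t₁ ≤ boxCox s t₂ - boxCox s t₁ :=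
  (sub_le_rpow_mul_boxCox_sub hs hs0 h₁ h₁₂).trans <| mul_le_of_le_one_left
    (sub_nonneg.2 <| (strictMonoOn_boxCox hs0).monotoneOn h₁ (h₁.trans_le h₁₂) h₁₂)
    (Real.rpow_le_one (h₁.trans_le h₁₂).le h₂ (by linarith))

end boxCox

lemma concaveOn_boxCox_comp {s : ℝ} {S : Set ℝ} {f : ℝ → ℝ} (hs0 : s ≠ 0)
    (hneg : s < 0 → ConvexOn ℝ S (fun x => f x ^ s))
    (hpos : 0 < s → ConcaveOn ℝ S (fun x => f x ^ s)) :
    ConcaveOn ℝ S (fun x => boxCox s (f x)) := by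
  rcases hs0.lt_or_gt with hs | hs
  · refine (((hneg hs).smul (c := -s⁻¹) (by simpa using hs.le)).neg.add_const (-s⁻¹)).congr
      fun x _ => ?_
    simp only [Pi.add_apply, Pi.neg_apply, smul_eq_mul, boxCox]
    ring
  · refine (((hpos hs).smul (c := s⁻¹) (by positivity)).add_const (-s⁻¹)).congr fun x _ => ?_
    simp only [Pi.add_apply, smul_eq_mul, boxCox]
    ring

lemma IsBiSStarConcave.concaveOn_boxCox {s : ℝ} {G : ℝ → ℝ} (hbi : IsBiSStarConcave s G)
    (hs0 : s ≠ 0) :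
    ConcaveOn ℝ (JSet G) (fun x => boxCox s (G x)) ∧
      ConcaveOn ℝ (JSet G) (fun x => boxCox s (1 - G x)) :=
  ⟨concaveOn_boxCox_comp hs0 (fun h => (hbi.2.1 h).1) (fun h => (hbi.2.2.2 h).1),
    concaveOn_boxCox_comp hs0 (fun h => (hbi.2.1 h).2) (fun h => (hbi.2.2.2 h).2)⟩

lemma ConcaveOn.mul_sub_le_mul_sub {S : Set ℝ} {f : ℝ → ℝ} (hf : ConcaveOn ℝ S f)
    {x y z w : ℝ} (hx : x ∈ S) (hw : w ∈ S) (hxy : x ≤ y) (hyz : y ≤ z) (hzw : z ≤ w) :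
    (y - x) * (f w - f z) ≤ (w - z) * (f y - f x) := by
  rcases hxy.eq_or_lt with rfl | hxy
  · simp
  rcases hzw.eq_or_lt with rfl | hzw
  · simp
  have hy : y ∈ S := hf.1.ordConnected.out hx hw ⟨hxy.le, hyz.trans hzw.le⟩
  have hslope : (f w - f z) / (w - z) ≤ (f y - f x) / (y - x) := by
    rcases hyz.eq_or_lt with rfl | hyz
    · exact hf.slope_anti_adjacent hx hw hxy hzw
    · have hz : z ∈ S := hf.1.ordConnected.out hx hw ⟨(hxy.trans hyz).le, hzw.le⟩
      exact (hf.slope_anti_adjacent hy hw hyz hzw).trans (hf.slope_anti_adjacent hx hz hxy hyz)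
  rw [div_le_div_iff₀ (sub_pos.2 hzw) (sub_pos.2 hxy)] at hslope
  linarith

lemma convexOn_neg_rpow_one_sub_div {s : ℝ} (hs : s ≤ 1) (hs0 : s ≠ 0) :
    ConvexOn ℝ (Ici 0) (fun t : ℝ => -t ^ (1 - s) / s) := by
  rcases hs0.lt_or_gt with hs' | hs'
  · refine ((convexOn_rpow (p := 1 - s) (by linarith)).smul (c := -s⁻¹)
      (by simpa using hs'.le)).congr fun t _ => ?_
    simp only [smul_eq_mul]
    ring
  · refine ((Real.concaveOn_rpow (p := 1 - s) (by linarith) (by linarith)).neg.smul (c := s⁻¹)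
      (by positivity)).congr fun t _ => ?_
    simp only [Pi.neg_apply, smul_eq_mul]
    ring

lemma mul_boxCox_sub_add_mul_boxCox_sub_le_max {s α β w : ℝ} (hs : s ≤ 1) (hs0 : s ≠ 0)
    (hα : 0 < α) (hβ : β < 1) (hw : w ∈ Icc α β) :
    w ^ (1 - s) * (boxCox s w - boxCox s α) +
        (1 - w) ^ (1 - s) * (boxCox s (1 - w) - boxCox s (1 - β)) ≤
      max (boxCox s β - boxCox s α) (boxCox s (1 - α) - boxCox s (1 - β)) := by
  set ρ : ℝ → ℝ := fun t => t ^ (1 - s) * (boxCox s t - boxCox s α) +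
    (1 - t) ^ (1 - s) * (boxCox s (1 - t) - boxCox s (1 - β))
  have hαβ : α ≤ β := hw.1.trans hw.2
  have hIcc : Icc α β ⊆ Ioo 0 1 := fun t ht => ⟨hα.trans_le ht.1, ht.2.trans_lt hβ⟩
  have hg := convexOn_neg_rpow_one_sub_div hs hs0
  have hg₁ := hg.subset (fun t ht => (hIcc ht).1.le) (convex_Icc α β)
  have hg₂ := (hg.comp_affineMap (AffineMap.lineMap (1 : ℝ) 0)).subset
    (fun t ht => by simpa [AffineMap.lineMap_apply] using (hIcc ht).2.le) (convex_Icc α β)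
  -- `ρ t = 1/s + α^s g(t) + (1-β)^s g(1-t)` with `g t = -t^(1-s)/s` convex.
  have hρ : ConvexOn ℝ (Icc α β) ρ := by
    refine (((hg₁.smul (c := α ^ s) (by positivity)).add
      (hg₂.smul (c := (1 - β) ^ s) (Real.rpow_nonneg (sub_pos.2 hβ).le s))).add_const s⁻¹).congr
      fun t ht => ?_
    obtain ⟨ht₀, ht₁⟩ := hIcc ht
    have e₁ : t ^ (1 - s) * t ^ s = t := by rw [← Real.rpow_add ht₀]; norm_num
    have e₂ : (1 - t) ^ (1 - s) * (1 - t) ^ s = 1 - t := by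
      rw [← Real.rpow_add (by linarith)]; norm_num
    simp only [ρ, boxCox, Pi.add_apply, smul_eq_mul, Function.comp_apply,
      AffineMap.lineMap_apply_ring, mul_one, mul_zero, add_zero]
    field_simp
    linear_combination -e₁ - e₂
  have hmono := (strictMonoOn_boxCox hs0).monotoneOn
  have hρα : ρ α ≤ boxCox s (1 - α) - boxCox s (1 - β) := by
    simp only [ρ, sub_self, mul_zero, zero_add]
    exact mul_le_of_le_one_left
      (sub_nonneg.2 (hmono (sub_pos.2 hβ) (by rw [mem_Ioi]; linarith) (by linarith)))
      (Real.rpow_le_one (by linarith) (by linarith) (by linarith))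
  have hρβ : ρ β ≤ boxCox s β - boxCox s α := by
    simp only [ρ, sub_self, mul_zero, add_zero]
    exact mul_le_of_le_one_left (sub_nonneg.2 (hmono hα (hα.trans_le hαβ) hαβ))
      (Real.rpow_le_one (by linarith) hβ.le (by linarith))
  exact (hρ.le_max_of_mem_Icc (left_mem_Icc.2 hαβ) (right_mem_Icc.2 hαβ) hw).trans
    (max_le (le_max_of_le_right hρα) (le_max_of_le_left hρβ))

noncomputable def bandLipschitzConst (s a b u v : ℝ) : ℝ :=
  max (boxCox s v - boxCox s u) (boxCox s (1 - u) - boxCox s (1 - v)) / (b - a)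

lemma bandLipschitzConst_nonneg {s a b u v : ℝ} (hs0 : s ≠ 0) (hu : 0 < u) (huv : u ≤ v)
    (hab : a ≤ b) : 0 ≤ bandLipschitzConst s a b u v :=
  div_nonneg (le_max_of_le_left (sub_nonneg.2 <|
    (strictMonoOn_boxCox hs0).monotoneOn hu (hu.trans_le huv) huv)) (sub_nonneg.2 hab)

lemma bandLipschitzConst_mono {s a b u v u' v' : ℝ} (hs0 : s ≠ 0) (hab : a ≤ b) (hu : 0 < u)
    (huu' : u ≤ u') (hu'v' : u' ≤ v') (hv'v : v' ≤ v) (hv : v < 1) :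
    bandLipschitzConst s a b u' v' ≤ bandLipschitzConst s a b u v := by
  have hmono := (strictMonoOn_boxCox hs0).monotoneOn
  have hu' : 0 < u' := hu.trans_le huu'
  unfold bandLipschitzConst
  gcongr ?_ / _
  refine max_le_max (sub_le_sub (hmono ?_ ?_ hv'v) (hmono hu hu' huu'))
    (sub_le_sub (hmono ?_ ?_ ?_) (hmono ?_ ?_ ?_)) <;>
    (try rw [mem_Ioi]) <;> linarith

lemma bandLipschitzConst_eq {s a b u v : ℝ} (hab : a ≤ b) :
    bandLipschitzConst s a b u v =
      max ((v ^ s - u ^ s) / (s * (b - a))) (((1 - u) ^ s - (1 - v) ^ s) / (s * (b - a))) := by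
  rw [bandLipschitzConst, boxCox_sub_boxCox, boxCox_sub_boxCox, ← div_div, ← div_div,
    max_div_div_right (sub_nonneg.2 hab)]

section Band

variable {s a b x z : ℝ} {G : ℝ → ℝ}

lemma Monotone.mem_JSet_of_le_of_le (hmono : Monotone G) (ha : a ∈ JSet G) (hb : b ∈ JSet G)
    (hax : a ≤ x) (hxb : x ≤ b) : x ∈ JSet G :=
  ⟨ha.1.trans_le (hmono hax), (hmono hxb).trans_lt hb.2⟩

lemma Monotone.sub_mul_le_of_concaveOn_boxCox_of_le (hs : s ≤ 1) (hs0 : s ≠ 0)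
    (hmono : Monotone G) (hΦ : ConcaveOn ℝ (JSet G) (fun x => boxCox s (G x)))
    (ha : a ∈ JSet G) (hz : z ∈ JSet G) (hab : a ≤ b) (hbx : b ≤ x) (hxz : x ≤ z) :
    (G z - G x) * (b - a) ≤ (z - x) * (boxCox s (G b) - boxCox s (G a)) := by
  have hx := hmono.mem_JSet_of_le_of_le ha hz (hab.trans hbx) hxz
  have hincr := sub_le_boxCox_sub hs hs0 hx.1 (hmono hxz) hz.2.le
  have hchord := hΦ.mul_sub_le_mul_sub ha hz hab hbx hxz
  calc (G z - G x) * (b - a) ≤ (boxCox s (G z) - boxCox s (G x)) * (b - a) :=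
        mul_le_mul_of_nonneg_right hincr (sub_nonneg.2 hab)
    _ ≤ (z - x) * (boxCox s (G b) - boxCox s (G a)) := by linarith

lemma Monotone.sub_mul_le_of_concaveOn_boxCox_one_sub_of_le (hs : s ≤ 1) (hs0 : s ≠ 0)
    (hmono : Monotone G) (hΨ : ConcaveOn ℝ (JSet G) (fun x => boxCox s (1 - G x)))
    (hx : x ∈ JSet G) (hb : b ∈ JSet G) (hxz : x ≤ z) (hza : z ≤ a) (hab : a ≤ b) :
    (G z - G x) * (b - a) ≤ (z - x) * (boxCox s (1 - G a) - boxCox s (1 - G b)) := by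
  have hz := hmono.mem_JSet_of_le_of_le hx hb hxz (hza.trans hab)
  have hincr : G z - G x ≤ boxCox s (1 - G x) - boxCox s (1 - G z) := by
    simpa only [sub_sub_sub_cancel_left] using sub_le_boxCox_sub hs hs0 (sub_pos.2 hz.2)
      (sub_le_sub_left (hmono hxz) 1) (by linarith [hx.1])
  have hchord := hΨ.mul_sub_le_mul_sub hx hb hxz hza hab
  calc (G z - G x) * (b - a) ≤ (boxCox s (1 - G x) - boxCox s (1 - G z)) * (b - a) :=
        mul_le_mul_of_nonneg_right hincr (sub_nonneg.2 hab)
    _ ≤ (z - x) * (boxCox s (1 - G a) - boxCox s (1 - G b)) := by linarith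

lemma Monotone.sub_mul_le_of_concaveOn_boxCox_of_mem_Icc (hs : s ≤ 1) (hs0 : s ≠ 0)
    (hmono : Monotone G) (hΦ : ConcaveOn ℝ (JSet G) (fun x => boxCox s (G x)))
    (hΨ : ConcaveOn ℝ (JSet G) (fun x => boxCox s (1 - G x)))
    (ha : a ∈ JSet G) (hb : b ∈ JSet G) (hax : a ≤ x) (hxz : x ≤ z) (hzb : z ≤ b) :
    (G z - G x) * ((x - a) + (b - z)) ≤
      (z - x) * (G z ^ (1 - s) * (boxCox s (G x) - boxCox s (G a)) +
        (1 - G x) ^ (1 - s) * (boxCox s (1 - G x) - boxCox s (1 - G b))) := by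
  have hx := hmono.mem_JSet_of_le_of_le ha hb hax (hxz.trans hzb)
  have hz := hmono.mem_JSet_of_le_of_le ha hb (hax.trans hxz) hzb
  have hincrΦ := sub_le_rpow_mul_boxCox_sub hs hs0 hx.1 (hmono hxz)
  have hincrΨ : G z - G x ≤ (1 - G x) ^ (1 - s) * (boxCox s (1 - G x) - boxCox s (1 - G z)) := by
    simpa only [sub_sub_sub_cancel_left] using sub_le_rpow_mul_boxCox_sub hs hs0
      (sub_pos.2 hz.2) (sub_le_sub_left (hmono hxz) 1)
  have hchordΦ := hΦ.mul_sub_le_mul_sub ha hz hax le_rfl hxz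
  have hchordΨ := hΨ.mul_sub_le_mul_sub hx hb hxz le_rfl hzb
  have hΨzx : boxCox s (1 - G z) ≤ boxCox s (1 - G x) :=
    (strictMonoOn_boxCox hs0).monotoneOn (sub_pos.2 hz.2) (sub_pos.2 hx.2)
      (sub_le_sub_left (hmono hxz) 1)
  have hpowΦ : 0 ≤ G z ^ (1 - s) := Real.rpow_nonneg hz.1.le _
  have hpowΨ : 0 ≤ (1 - G x) ^ (1 - s) := Real.rpow_nonneg (sub_pos.2 hx.2).le _
  have hleft : (G z - G x) * (x - a) ≤
      (z - x) * (G z ^ (1 - s) * (boxCox s (G x) - boxCox s (G a))) := calc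
    _ ≤ G z ^ (1 - s) * (boxCox s (G z) - boxCox s (G x)) * (x - a) :=
      mul_le_mul_of_nonneg_right hincrΦ (sub_nonneg.2 hax)
    _ = G z ^ (1 - s) * ((x - a) * (boxCox s (G z) - boxCox s (G x))) := by ring
    _ ≤ G z ^ (1 - s) * ((z - x) * (boxCox s (G x) - boxCox s (G a))) :=
      mul_le_mul_of_nonneg_left hchordΦ hpowΦ
    _ = _ := by ring
  have hright : (G z - G x) * (b - z) ≤
      (1 - G x) ^ (1 - s) * ((z - x) * (boxCox s (1 - G x) - boxCox s (1 - G b))) := calc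
    _ ≤ (1 - G x) ^ (1 - s) * (boxCox s (1 - G x) - boxCox s (1 - G z)) * (b - z) :=
      mul_le_mul_of_nonneg_right hincrΨ (sub_nonneg.2 hzb)
    _ = (1 - G x) ^ (1 - s) * ((b - z) * (boxCox s (1 - G x) - boxCox s (1 - G z))) := by ring
    _ ≤ (1 - G x) ^ (1 - s) * ((z - x) * (boxCox s (1 - G x) - boxCox s (1 - G b))) := by
      refine mul_le_mul_of_nonneg_left ?_ hpowΨ
      linarith [mul_le_mul_of_nonneg_left hΨzx (sub_nonneg.2 hxz)]
    _ = _ := by ring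
  linear_combination hleft + hright

lemma Monotone.eventually_slope_lt_of_mem_Ico (hs : s ≤ 1) (hs0 : s ≠ 0)
    (hmono : Monotone G) (hcont : Continuous G)
    (hΦ : ConcaveOn ℝ (JSet G) (fun x => boxCox s (G x)))
    (hΨ : ConcaveOn ℝ (JSet G) (fun x => boxCox s (1 - G x)))
    (ha : a ∈ JSet G) (hb : b ∈ JSet G) (hx : x ∈ Ico a b) {r : ℝ}
    (hr : bandLipschitzConst s a b (G a) (G b) < r) :
    ∀ᶠ z in 𝓝[>] x, slope G x z < r := by
  have hxJ := hmono.mem_JSet_of_le_of_le ha hb hx.1 hx.2.le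
  set K : ℝ → ℝ := fun z => (G z ^ (1 - s) * (boxCox s (G x) - boxCox s (G a)) +
    (1 - G x) ^ (1 - s) * (boxCox s (1 - G x) - boxCox s (1 - G b))) / ((x - a) + (b - z))
  have hKx : K x < r := by
    refine lt_of_le_of_lt ?_ hr
    have hden : (x - a) + (b - x) = b - a := by ring
    simp only [K, hden, bandLipschitzConst]
    gcongr
    · linarith [hx.1, hx.2]
    · exact mul_boxCox_sub_add_mul_boxCox_sub_le_max hs hs0 ha.1 hb.2
        ⟨hmono hx.1, hmono hx.2.le⟩
  have hK : ContinuousAt K x := by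
    refine ContinuousAt.div ?_ (by fun_prop) (by linarith [hx.1, hx.2])
    exact ((hcont.continuousAt.rpow_const (Or.inl hxJ.1.ne')).mul continuousAt_const).add
      continuousAt_const
  filter_upwards [Ioo_mem_nhdsGT hx.2,
    nhdsWithin_le_nhds (hK.eventually_lt continuousAt_const hKx)] with z hz hKz
  refine lt_of_le_of_lt ?_ hKz
  have hpos : 0 < (x - a) + (b - z) := by linarith [hx.1, hz.2]
  rw [slope_def_field, div_le_div_iff₀ (sub_pos.2 hz.1) hpos]
  linarith
    [hmono.sub_mul_le_of_concaveOn_boxCox_of_mem_Icc hs hs0 hΦ hΨ ha hb hx.1 hz.1.le hz.2.le]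

lemma Monotone.eventually_slope_lt (hs : s ≤ 1) (hs0 : s ≠ 0)
    (hmono : Monotone G) (hcont : Continuous G) (hle : ∀ x, G x ≤ 1)
    (hΦ : ConcaveOn ℝ (JSet G) (fun x => boxCox s (G x)))
    (hΨ : ConcaveOn ℝ (JSet G) (fun x => boxCox s (1 - G x)))
    (ha : a ∈ JSet G) (hb : b ∈ JSet G) (hab : a < b) (hx : 0 < G x) {r : ℝ}
    (hr : bandLipschitzConst s a b (G a) (G b) < r) :
    ∀ᶠ z in 𝓝[>] x, slope G x z < r := by
  have hba : 0 < b - a := sub_pos.2 hab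
  have hr₀ : 0 < r := (bandLipschitzConst_nonneg hs0 ha.1 (hmono hab.le) hab.le).trans_lt hr
  rcases (hle x).eq_or_lt with hx₁ | hx₁
  · filter_upwards [self_mem_nhdsWithin] with z hz
    rw [slope_def_field, hx₁]
    exact (div_nonpos_of_nonpos_of_nonneg (by linarith [hle z]) (sub_pos.2 hz).le).trans_lt hr₀
  have hxJ : x ∈ JSet G := ⟨hx, hx₁⟩
  rcases lt_or_ge x a with hxa | hax
  · filter_upwards [Ioc_mem_nhdsGT hxa] with z hz
    refine lt_of_le_of_lt ?_ hr
    rw [bandLipschitzConst, slope_def_field, div_le_div_iff₀ (sub_pos.2 hz.1) hba]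
    refine (hmono.sub_mul_le_of_concaveOn_boxCox_one_sub_of_le hs hs0 hΨ hxJ hb hz.1.le hz.2
      hab.le).trans ?_
    rw [mul_comm _ (z - x)]
    exact mul_le_mul_of_nonneg_left (le_max_right _ _) (sub_pos.2 hz.1).le
  rcases lt_or_ge x b with hxb | hbx
  · exact hmono.eventually_slope_lt_of_mem_Ico hs hs0 hcont hΦ hΨ ha hb ⟨hax, hxb⟩ hr
  · filter_upwards [self_mem_nhdsWithin,
      nhdsWithin_le_nhds (hcont.continuousAt.eventually_lt continuousAt_const hx₁)]
      with z (hz : x < z) hz₁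
    have hzJ : z ∈ JSet G := ⟨hx.trans_le (hmono hz.le), hz₁⟩
    refine lt_of_le_of_lt ?_ hr
    rw [bandLipschitzConst, slope_def_field, div_le_div_iff₀ (sub_pos.2 hz) hba]
    refine (hmono.sub_mul_le_of_concaveOn_boxCox_of_le hs hs0 hΦ ha hzJ hab.le hbx
      hz.le).trans ?_
    rw [mul_comm _ (z - x)]
    exact mul_le_mul_of_nonneg_left (le_max_left _ _) (sub_pos.2 hz).le

end Band

lemma Monotone.sub_le_mul_sub_of_eventually_slope_lt {f : ℝ → ℝ} {L c p q : ℝ}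
    (hmono : Monotone f) (hf : Continuous f) (hL : 0 ≤ L)
    (hslope : ∀ x, c < f x → ∀ r, L < r → ∀ᶠ z in 𝓝[>] x, slope f x z < r)
    (hp : c ≤ f p) (hpq : p ≤ q) :
    f q - f p ≤ L * (q - p) := by
  have hfence : ∀ t, c < f t → t ≤ q → f q ≤ f t + L * (q - t) := fun t ht htq =>
    image_le_of_liminf_slope_right_le_deriv_boundary (B := fun y => f t + L * (y - t))
      (B' := fun _ => L) hf.continuousOn (by simp) (by fun_prop)
      (fun y _ => by simpa using (((hasDerivAt_id y).sub_const t).const_mul L).hasDerivWithinAt)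
      (fun y hy r hr => (hslope y (ht.trans_le (hmono hy.1)) r hr).frequently) ⟨htq, le_rfl⟩
  refine le_of_forall_pos_le_add fun ε hε => ?_
  rcases le_or_gt (f q) (f p + ε) with hsmall | hlarge
  · linarith [mul_nonneg hL (sub_nonneg.2 hpq)]
  obtain ⟨t, ⟨hpt, htq⟩, hft⟩ := intermediate_value_Icc hpq hf.continuousOn
    (⟨by linarith, hlarge.le⟩ : f p + ε ∈ Icc (f p) (f q))
  linarith [hfence t (by linarith) htq, mul_le_mul_of_nonneg_left (sub_le_sub_left hpt q) hL]

lemma Monotone.sub_le_mul_sub_of_concaveOn_boxCox {s a b p q : ℝ} {G : ℝ → ℝ}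
    (hs : s ≤ 1) (hs0 : s ≠ 0) (hmono : Monotone G) (hcont : Continuous G)
    (hrange : ∀ x, 0 ≤ G x ∧ G x ≤ 1)
    (hΦ : ConcaveOn ℝ (JSet G) (fun x => boxCox s (G x)))
    (hΨ : ConcaveOn ℝ (JSet G) (fun x => boxCox s (1 - G x)))
    (ha : a ∈ JSet G) (hb : b ∈ JSet G) (hab : a < b) (hpq : p ≤ q) :
    G q - G p ≤ bandLipschitzConst s a b (G a) (G b) * (q - p) :=
  hmono.sub_le_mul_sub_of_eventually_slope_lt hcont
    (bandLipschitzConst_nonneg hs0 ha.1 (hmono hab.le) hab.le)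
    (fun _ hx _ hr => hmono.eventually_slope_lt hs hs0 hcont (fun x => (hrange x).2) hΦ hΨ
      ha hb hab hx hr)
    (hrange p).1 hpq

lemma Monotone.abs_sub_le_mul_abs_sub {f : ℝ → ℝ} {L : ℝ} (hmono : Monotone f)
    (h : ∀ p q, p ≤ q → f q - f p ≤ L * (q - p)) (x y : ℝ) : |f x - f y| ≤ L * |x - y| := by
  rcases le_total x y with hxy | hyx
  · rw [abs_sub_comm (f x), abs_sub_comm x, abs_of_nonneg (sub_nonneg.2 (hmono hxy)),
      abs_of_nonneg (sub_nonneg.2 hxy)]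
    exact h x y hxy
  · rw [abs_of_nonneg (sub_nonneg.2 (hmono hyx)), abs_of_nonneg (sub_nonneg.2 hyx)]
    exact h y x hyx

theorem lipschitz_of_biSStarConcave_band_general
    (s : ℝ) (hs : s ≤ 1) (hs0 : s ≠ 0)
    (a b u v : ℝ) (hab : a < b) (hu : 0 < u) (hv : v < 1)
    (G : ℝ → ℝ) (hG : IsDistFun G)
    (hbi : IsBiSStarConcave s G)
    (hGa : u ≤ G a) (hGb : G b ≤ v) :
    (∀ x y : ℝ, |G x - G y| ≤
      max ((v ^ s - u ^ s) / (s * (b - a))) (((1 - u) ^ s - (1 - v) ^ s) / (s * (b - a)))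
        * |x - y|) ∧
    (∀ x ∈ JSet G, deriv G x ≤
      max ((v ^ s - u ^ s) / (s * (b - a)))
        (((1 - u) ^ s - (1 - v) ^ s) / (s * (b - a)))) := by
  obtain ⟨hmono, hrange, -⟩ := hG
  obtain ⟨hΦ, hΨ⟩ := hbi.concaveOn_boxCox hs0
  have hGab := hmono hab.le
  have ha : a ∈ JSet G := ⟨hu.trans_le hGa, hGab.trans_lt (hGb.trans_lt hv)⟩
  have hb : b ∈ JSet G := ⟨hu.trans_le (hGa.trans hGab), hGb.trans_lt hv⟩
  rw [← bandLipschitzConst_eq hab.le]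
  set M := bandLipschitzConst s a b u v
  have hGM : bandLipschitzConst s a b (G a) (G b) ≤ M :=
    bandLipschitzConst_mono hs0 hab.le hu hGa hGab hGb hv
  have hM : 0 ≤ M := (bandLipschitzConst_nonneg hs0 ha.1 hGab hab.le).trans hGM
  have hlip : ∀ x y, |G x - G y| ≤ M * |x - y| := hmono.abs_sub_le_mul_abs_sub fun p q hpq =>
    (hmono.sub_le_mul_sub_of_concaveOn_boxCox hs hs0 hbi.1 hrange hΦ hΨ ha hb hab hpq).trans
      (mul_le_mul_of_nonneg_right hGM (sub_nonneg.2 hpq))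
  refine ⟨hlip, fun x _ => (le_abs_self _).trans ?_⟩
  have hG : LipschitzWith ⟨M, hM⟩ G := LipschitzWith.of_dist_le_mul fun x y => by
    rw [Real.dist_eq, Real.dist_eq]
    exact hlip x y
  exact norm_deriv_le_of_lipschitz hG

/-- Lemma 6(i), core: if `G` is a non-degenerate bi-`s*`-concave distribution
function with `G(a) ≥ u` and `G(b) ≤ v` (where `a < b`, `0 < u < v < 1`), then `G` is Lipschitz
on `ℝ` with constant `max{γ₁, γ₂}`, where `γ₁ = (v^{s*} - u^{s*})/(s*(b - a))` and
`γ₂ = ((1-u)^{s*} - (1-v)^{s*})/(s*(b - a))`; equivalently its derivative `g = G'` satisfies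
`g(x) ≤ max{γ₁, γ₂}` for every `x ∈ J(G)`. -/
theorem lipschitz_of_biSStarConcave_band
    (s : ℝ) (hs : s ≤ 1) (hs0 : s ≠ 0)
    (a b u v : ℝ) (hab : a < b) (hu : 0 < u) (huv : u < v) (hv : v < 1)
    (G : ℝ → ℝ) (hG : IsDistFun G) (hnd : NonDeg G)
    (hbi : IsBiSStarConcave s G)
    (hGa : u ≤ G a) (hGb : G b ≤ v) :
    (∀ x y : ℝ, |G x - G y| ≤
      max ((v ^ s - u ^ s) / (s * (b - a))) (((1 - u) ^ s - (1 - v) ^ s) / (s * (b - a)))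
        * |x - y|) ∧
    (∀ x ∈ JSet G, deriv G x ≤
      max ((v ^ s - u ^ s) / (s * (b - a)))
        (((1 - u) ^ s - (1 - v) ^ s) / (s * (b - a)))) :=
  lipschitz_of_biSStarConcave_band_general s hs hs0 a b u v hab hu hv G hG hbi hGa hGb
end

section
/- (Lemma 6(ii), core.) Let s* ≤ 1 with s* ≠ 0, let a < b be real numbers and 0 < u < v < 1, and set γ₁ = (v^{s*} − u^{s*})/(s*(b − a)) and γ₂ = ((1−u)^{s*} − (1−v)^{s*})/(s*(b − a)). If G is a non-degenerate bi-s*-concave distribution function with G(a) ≤ u and G(b) ≥ v, then: for all x ≤ a, G(x) ≤ (max{u^{s*} + s* γ₁ (x − a), 0})^{1/s*}, and for all x ≥ b, 1 − G(x) ≤ (max{(1−v)^{s*} − s* γ₂ (x − b), 0})^{1/s*} (here, for s* > 0, max{t,0}^{1/s*} is 0 when t ≤ 0; for s* < 0 the expressions inside the maxima are automatically positive). -/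
open Set MeasureTheory Filter
open scoped NNReal ENNReal

/-!
With `ψ t = t ^ s / s`, increasing on `(0, ∞)` for either sign of `s`, bi-`s`-concavity says that
`ψ ∘ G` and `ψ ∘ (1 - G)` are concave on `J(G)`, and `γ₁ = (ψ v - ψ u) / (b - a)`. By the
intermediate value theorem `G` takes the values `u < v` at points `c < d` of `[a, b]`; left of `c`,
concavity keeps `ψ ∘ G` below the secant through `c` and `d`, and on `x ≤ a` that secant lies below
the line of slope `γ₁` through `(a, ψ u)`. Inverting `ψ` gives the lower tail bound; the upper one
is the same argument applied to `x ↦ 1 - G (-x)`.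
-/

lemma ConcaveOn.le_add_slope_mul_sub_of_le {S : Set ℝ} {φ : ℝ → ℝ} (hφ : ConcaveOn ℝ S φ)
    {x c d : ℝ} (hx : x ∈ S) (hd : d ∈ S) (hxc : x ≤ c) (hcd : c < d) :
    φ x ≤ φ c + (φ d - φ c) / (d - c) * (x - c) := by
  rcases hxc.eq_or_lt with rfl | hxc
  · simp
  have hslope := hφ.slope_anti_adjacent hx hd hxc hcd
  rw [le_div_iff₀ (sub_pos.2 hxc)] at hslope
  linarith

lemma div_mul_sub_le_div_mul_sub_of_Icc_subset {Δ a b c d x : ℝ} (hΔ : 0 ≤ Δ) (hac : a ≤ c)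
    (hcd : c < d) (hdb : d ≤ b) (hxa : x ≤ a) :
    Δ / (d - c) * (x - c) ≤ Δ / (b - a) * (x - a) :=
  calc Δ / (d - c) * (x - c) ≤ Δ / (d - c) * (x - a) := by
        gcongr
    _ ≤ Δ / (b - a) * (x - a) := by
        apply mul_le_mul_of_nonpos_right _ (by linarith)
        gcongr

theorem apply_le_secant_of_concaveOn_comp {F ψ : ℝ → ℝ} (hmono : Monotone F) (hcont : Continuous F)
    (hconc : ConcaveOn ℝ (JSet F) (ψ ∘ F)) {a b u v x : ℝ} (hab : a < b) (hu : 0 < u)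
    (huv : u < v) (hv : v < 1) (hψ : ψ u ≤ ψ v) (hFa : F a ≤ u) (hFb : v ≤ F b) (hxa : x ≤ a)
    (hFx : 0 < F x) :
    ψ (F x) ≤ ψ u + (ψ v - ψ u) / (b - a) * (x - a) := by
  have hIVT := intermediate_value_Icc hab.le hcont.continuousOn
  obtain ⟨c, ⟨hac, -⟩, hFc⟩ := hIVT ⟨hFa, huv.le.trans hFb⟩
  obtain ⟨d, ⟨-, hdb⟩, hFd⟩ := hIVT ⟨hFa.trans huv.le, hFb⟩
  have hcd : c < d := hmono.reflect_lt (by rwa [hFc, hFd])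
  have hxJ : x ∈ JSet F := ⟨hFx, (hmono hxa).trans_lt (hFa.trans_lt (huv.trans hv))⟩
  have hdJ : d ∈ JSet F := ⟨hFd ▸ hu.trans huv, hFd ▸ hv⟩
  have hchord := hconc.le_add_slope_mul_sub_of_le hxJ hdJ (hxa.trans hac) hcd
  simp only [Function.comp_apply, hFc, hFd] at hchord
  have := div_mul_sub_le_div_mul_sub_of_Icc_subset (sub_nonneg.2 hψ) hac hcd hdb hxa
  linarith

lemma rpow_div_self_le_rpow_div_self {s u v : ℝ} (hs0 : s ≠ 0) (hu : 0 < u) (huv : u ≤ v) :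
    u ^ s / s ≤ v ^ s / s := by
  rcases hs0.lt_or_gt with hs | hs
  · exact div_le_div_of_nonpos_of_le hs.le (Real.rpow_le_rpow_of_nonpos hu huv hs.le)
  · exact div_le_div_of_nonneg_right (Real.rpow_le_rpow hu.le huv hs.le) hs.le

/-- For `s < 0`, `t ↦ t ^ s / s` maps `(0, ∞)` onto `(-∞, 0)`; for `w ≥ 0` the right-hand side
would be the junk value `0 ^ (1 / s) = 0`. -/
lemma le_max_mul_rpow_inv {s y w : ℝ} (hs0 : s ≠ 0) (hy : 0 < y) (h : y ^ s / s ≤ w)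
    (hw : s < 0 → w < 0) : y ≤ (max (s * w) 0) ^ (1 / s) := by
  have hy_eq : y = (y ^ s) ^ (1 / s) := by rw [one_div, Real.rpow_rpow_inv hy.le hs0]
  rcases hs0.lt_or_gt with hs | hs
  · have hsw : 0 < s * w := mul_pos_of_neg_of_neg hs (hw hs)
    rw [max_eq_left hsw.le, hy_eq]
    refine Real.rpow_le_rpow_of_nonpos hsw ?_ (one_div_neg.2 hs).le
    rwa [div_le_iff_of_neg' hs] at h
  · rw [hy_eq]
    refine Real.rpow_le_rpow (Real.rpow_nonneg hy.le s) (le_max_of_le_left ?_) (one_div_pos.2 hs).le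
    rwa [div_le_iff₀' hs] at h

lemma ConcaveOn.div_const_of_pos {S : Set ℝ} {f : ℝ → ℝ} {s : ℝ} (hf : ConcaveOn ℝ S f)
    (hs : 0 < s) : ConcaveOn ℝ S (fun x => f x / s) := by
  simpa only [smul_eq_mul, div_eq_inv_mul] using hf.smul (inv_nonneg.2 hs.le)

lemma ConvexOn.concaveOn_div_const_of_neg {S : Set ℝ} {f : ℝ → ℝ} {s : ℝ} (hf : ConvexOn ℝ S f)
    (hs : s < 0) : ConcaveOn ℝ S (fun x => f x / s) := by
  have := hf.neg.smul (inv_nonneg.2 (neg_nonneg.2 hs.le))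
  simpa only [Pi.neg_apply, smul_eq_mul, inv_neg, neg_mul_neg, div_eq_inv_mul] using this

lemma IsBiSStarConcave.concaveOn_rpow_div {s : ℝ} {G : ℝ → ℝ} (hs0 : s ≠ 0)
    (hbi : IsBiSStarConcave s G) :
    ConcaveOn ℝ (JSet G) (fun x => G x ^ s / s) ∧
      ConcaveOn ℝ (JSet G) (fun x => (1 - G x) ^ s / s) := by
  rcases hs0.lt_or_gt with hs | hs
  · obtain ⟨hG, hG'⟩ := hbi.2.1 hs
    exact ⟨hG.concaveOn_div_const_of_neg hs, hG'.concaveOn_div_const_of_neg hs⟩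
  · obtain ⟨hG, hG'⟩ := hbi.2.2.2 hs
    exact ⟨hG.div_const_of_pos hs, hG'.div_const_of_pos hs⟩

theorem lower_tail_le_of_concaveOn_rpow_div {s : ℝ} (hs0 : s ≠ 0) {F : ℝ → ℝ} (hmono : Monotone F)
    (hcont : Continuous F) (hconc : ConcaveOn ℝ (JSet F) (fun x => F x ^ s / s))
    {a b u v x : ℝ} (hab : a < b) (hu : 0 < u) (huv : u < v) (hv : v < 1) (hFa : F a ≤ u)
    (hFb : v ≤ F b) (hxa : x ≤ a) :
    F x ≤ (max (u ^ s + s * ((v ^ s - u ^ s) / (s * (b - a))) * (x - a)) 0) ^ (1 / s) := by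
  rcases le_or_gt (F x) 0 with hFx | hFx
  · exact hFx.trans (Real.rpow_nonneg (le_max_right _ _) _)
  have hψ := rpow_div_self_le_rpow_div_self hs0 hu huv.le
  have hsecant := apply_le_secant_of_concaveOn_comp (ψ := fun t => t ^ s / s) hmono hcont hconc
    hab hu huv hv hψ hFa hFb hxa hFx
  have hinv := le_max_mul_rpow_inv hs0 hFx hsecant fun hs => by
    have hψu : u ^ s / s < 0 := div_neg_of_pos_of_neg (Real.rpow_pos_of_pos hu s) hs
    have hslope : (v ^ s / s - u ^ s / s) / (b - a) * (x - a) ≤ 0 :=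
      mul_nonpos_of_nonneg_of_nonpos (div_nonneg (sub_nonneg.2 hψ) (by linarith)) (by linarith)
    linarith
  convert hinv using 3
  field_simp

theorem JSet_one_sub_comp_neg (G : ℝ → ℝ) :
    JSet (fun x => 1 - G (-x)) = -JSet G := by
  ext x
  simp [JSet, and_comm]

theorem upper_tail_le_of_concaveOn_one_sub_rpow_div {s : ℝ} (hs0 : s ≠ 0) {F : ℝ → ℝ}
    (hmono : Monotone F) (hcont : Continuous F)
    (hconc : ConcaveOn ℝ (JSet F) (fun x => (1 - F x) ^ s / s))
    {a b u v x : ℝ} (hab : a < b) (hu : 0 < u) (huv : u < v) (hv : v < 1) (hFa : F a ≤ u)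
    (hFb : v ≤ F b) (hbx : b ≤ x) :
    1 - F x ≤
      (max ((1 - v) ^ s - s * (((1 - u) ^ s - (1 - v) ^ s) / (s * (b - a))) * (x - b)) 0)
        ^ (1 / s) := by
  have hmono' : Monotone fun y => 1 - F (-y) := fun y z hyz =>
    sub_le_sub_left (hmono (neg_le_neg hyz)) 1
  have hconc' : ConcaveOn ℝ (JSet fun y => 1 - F (-y)) fun y => (1 - F (-y)) ^ s / s := by
    rw [JSet_one_sub_comp_neg]
    exact hconc.comp_linearMap (-LinearMap.id)
  have := lower_tail_le_of_concaveOn_rpow_div hs0 hmono'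
    (continuous_const.sub (hcont.comp continuous_neg)) hconc' (neg_lt_neg hab) (sub_pos.2 hv)
    (sub_lt_sub_left huv 1) (sub_lt_self 1 hu) (by simp only [neg_neg]; linarith)
    (by simp only [neg_neg]; linarith) (neg_le_neg hbx)
  convert this using 3 <;> ring

theorem tail_bounds_of_biSStarConcave_band_general
    (s : ℝ) (hs0 : s ≠ 0)
    (a b u v : ℝ) (hab : a < b) (hu : 0 < u) (huv : u < v) (hv : v < 1)
    (G : ℝ → ℝ) (hG : IsDistFun G)
    (hbi : IsBiSStarConcave s G)
    (hGa : G a ≤ u) (hGb : v ≤ G b) :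
    (∀ x ≤ a,
      G x ≤ (max (u ^ s + s * ((v ^ s - u ^ s) / (s * (b - a))) * (x - a)) 0) ^ (1 / s)) ∧
    (∀ x ≥ b,
      1 - G x ≤
        (max ((1 - v) ^ s - s * (((1 - u) ^ s - (1 - v) ^ s) / (s * (b - a))) * (x - b)) 0)
          ^ (1 / s)) := by
  obtain ⟨hconc, hconc'⟩ := hbi.concaveOn_rpow_div hs0
  exact ⟨fun x hxa => lower_tail_le_of_concaveOn_rpow_div hs0 hG.1 hbi.1 hconc
      hab hu huv hv hGa hGb hxa,
    fun x hxb => upper_tail_le_of_concaveOn_one_sub_rpow_div hs0 hG.1 hbi.1 hconc'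
      hab hu huv hv hGa hGb hxb⟩

/-- Lemma 6(ii), core: if `G` is a non-degenerate bi-`s*`-concave distribution
function with `G(a) ≤ u` and `G(b) ≥ v` (where `a < b`, `0 < u < v < 1`), then with
`γ₁ = (v^{s*} - u^{s*})/(s*(b - a))` and `γ₂ = ((1-u)^{s*} - (1-v)^{s*})/(s*(b - a))`:
`G(x) ≤ (max{u^{s*} + s* γ₁ (x - a), 0})^{1/s*}` for `x ≤ a`, and
`1 - G(x) ≤ (max{(1-v)^{s*} - s* γ₂ (x - b), 0})^{1/s*}` for `x ≥ b`. -/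
theorem tail_bounds_of_biSStarConcave_band
    (s : ℝ) (hs : s ≤ 1) (hs0 : s ≠ 0)
    (a b u v : ℝ) (hab : a < b) (hu : 0 < u) (huv : u < v) (hv : v < 1)
    (G : ℝ → ℝ) (hG : IsDistFun G) (hnd : NonDeg G)
    (hbi : IsBiSStarConcave s G)
    (hGa : G a ≤ u) (hGb : v ≤ G b) :
    (∀ x ≤ a,
      G x ≤ (max (u ^ s + s * ((v ^ s - u ^ s) / (s * (b - a))) * (x - a)) 0) ^ (1 / s)) ∧
    (∀ x ≥ b,
      1 - G x ≤
        (max ((1 - v) ^ s - s * (((1 - u) ^ s - (1 - v) ^ s) / (s * (b - a))) * (x - b)) 0)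
          ^ (1 / s)) :=
  tail_bounds_of_biSStarConcave_band_general s hs0 a b u v hab hu huv hv G hG hbi hGa hGb
end
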